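/- arXiv:1401.6307 — 8 statements merged into one kernel-verified Lean document; each statement's English description precedes it below -/
import Mathlib

section
/- Every hypergraph H without empty hyperedges whose incidence graph is a bipartite permutation graph has a join path. -/
variable {V : Type} [DecidableEq V]

/-- A join tree of a hypergraph with edge set `E`: a tree on node set `E` such that
for every vertex `v`, the edges containing `v` induce a connected subtree. -/
structure JoinTreeOf (E : Finset (Finset V)) where
  T : SimpleGraph {f // f ∈ E}
  isTree : T.IsTree
  conn : ∀ v : V, (T.induce {f : {f // f ∈ E} | v ∈ f.1}).Preconnected

/-- `x` lies on the (unique) path from `r` to `y` in `G`. -/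
def onTreePath {α : Type} (G : SimpleGraph α) (r y x : α) : Prop :=
  ∀ p : G.Walk r y, p.IsPath → x ∈ p.support

/-- A disjoint branches decomposition of the hypergraph with edge set `E`, rooted at `root`:
a join tree rooted at `root` in which any two edges on different branches
(neither an ancestor of the other) are disjoint. -/
structure DBD (E : Finset (Finset V)) (root : Finset V) where
  J : JoinTreeOf E
  rootMem : root ∈ E
  disj : ∀ a b : {f // f ∈ E}, a ≠ b →
    ¬ onTreePath J.T ⟨root, rootMem⟩ b a →
    ¬ onTreePath J.T ⟨root, rootMem⟩ a b →
    a.1 ∩ b.1 = ∅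

/-- `H` is db-rootable in `e`. -/
def DbRootable (E : Finset (Finset V)) (e : Finset V) : Prop := Nonempty (DBD E e)

/-- Two hyperedges are linked by a path of pairwise-intersecting edges of `E`. -/
def edgeLinked (E : Finset (Finset V)) (a b : Finset V) : Prop :=
  Relation.ReflTransGen (fun x y => x ∈ E ∧ y ∈ E ∧ (x ∩ y).Nonempty) a b

open Classical in
/-- The connected component (as a set of edges) of the edge `e` in the hypergraph `E`. -/
noncomputable def component (E : Finset (Finset V)) (e : Finset V) : Finset (Finset V) :=
  E.filter (edgeLinked E e)

/-- `C` is (the edge set of) a connected component of the hypergraph with edge set `E`. -/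
def IsComponent (E C : Finset (Finset V)) : Prop := ∃ e ∈ E, C = component E e

/-- The hypergraph with edge set `E` is connected. -/
def HGConnected (E : Finset (Finset V)) : Prop := ∀ a ∈ E, ∀ b ∈ E, edgeLinked E a b

/-- Vertices `u` and `w` are connected by a path of edges in `E`. -/
def vtxLinked (E : Finset (Finset V)) (u w : V) : Prop :=
  Relation.ReflTransGen (fun x y => ∃ f ∈ E, x ∈ f ∧ y ∈ f) u w

/-- The hypergraph has a join path: a join tree whose underlying tree is a path
(every node has at most two neighbours). -/
def HasJoinPath (E : Finset (Finset V)) : Prop :=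
  ∃ J : JoinTreeOf E, ∀ f : {f // f ∈ E}, (J.T.neighborSet f).ncard ≤ 2


/-!
Order the hyperedges by `<_E`. Under a strong ordering the hyperedges containing a vertex `v`
form an interval of this order: if `x <_E y <_E z` and `v ∈ x ∩ z`, compare `v` with any vertex
`w` of the (nonempty) edge `y`; the strong-ordering condition applied to `(v, w, x, y)` or to
`(w, v, y, z)` puts `v` in `y`. So the Hasse diagram of `<_E`, which is a path, is a join tree:
the edges containing `v` induce a subpath.
-/

namespace SimpleGraph

variable {α : Type*}

theorem isAcyclic_hasse [LinearOrder α] : (hasse α).IsAcyclic := by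
  suffices h : ∀ a b : α, a ⋖ b → ∀ p : (hasse α).Walk a b, s(a, b) ∈ p.edges by
    refine isAcyclic_iff_forall_adj_isBridge.2 ?_
    rintro a b (hab | hba) <;> rw [isBridge_iff_forall_walk_mem_edges]
    · exact h a b hab
    · exact fun p => by simpa [Sym2.eq_swap] using h b a hba p.reverse
  intro a b hab p
  -- the walk has to leave `Iic a`, and `s(a, b)` is the only edge that does
  obtain ⟨d, hd, hfst, hsnd⟩ := p.exists_boundary_dart (Set.Iic a) le_rfl (not_le.2 hab.lt)
  simp only [Set.mem_Iic, not_le] at hfst hsnd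
  have hcov : d.fst ⋖ d.snd := d.adj.resolve_right fun h => (h.lt.trans_le hfst).not_gt hsnd
  have hfst_eq : d.fst = a := hfst.antisymm (hcov.le_of_lt hsnd)
  have hsnd_eq : d.snd = b := (hfst_eq ▸ hcov).unique_right hab
  have hedge : d.edge = s(a, b) := by rw [Dart.edge, Sym2.mk, ← hfst_eq, ← hsnd_eq]
  exact hedge ▸ List.mem_map_of_mem hd

theorem ncard_neighborSet_hasse_le_two [LinearOrder α] (a : α) :
    ((hasse α).neighborSet a).ncard ≤ 2 := by
  have hle_one {s : Set α} (hs : s.Subsingleton) : s.ncard ≤ 1 :=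
    (Set.ncard_le_one_iff hs.finite).2 fun hb hc => hs hb hc
  have hsucc : {b | a ⋖ b}.Subsingleton := fun _ hb _ hc => CovBy.unique_right hb hc
  have hpred : {b | b ⋖ a}.Subsingleton := fun _ hb _ hc => CovBy.unique_left hb hc
  calc ((hasse α).neighborSet a).ncard ≤ {b | a ⋖ b}.ncard + {b | b ⋖ a}.ncard :=
        Set.ncard_union_le _ _
    _ ≤ 2 := add_le_add (hle_one hsucc) (hle_one hpred)

theorem induce_hasse_of_ordConnected [PartialOrder α] (s : Set α) [hs : s.OrdConnected] :
    (hasse α).induce s = hasse s := by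
  have hcov (a b : s) : (a : α) ⋖ b ↔ a ⋖ b :=
    Set.OrdConnected.apply_covBy_apply_iff (OrderEmbedding.subtype (· ∈ s))
      (by rwa [OrderEmbedding.coe_subtype, Subtype.range_coe])
  ext a b
  simp [hasse_adj, hcov]

theorem preconnected_induce_hasse [LinearOrder α] [SuccOrder α] [IsSuccArchimedean α]
    (s : Set α) [s.OrdConnected] : ((hasse α).induce s).Preconnected := by
  rw [induce_hasse_of_ordConnected]
  exact hasse_preconnected_of_succ s

end SimpleGraph

theorem exists_relIso_fin_of_isStrictTotalOrder {β : Type*} [Fintype β] (r : β → β → Prop)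
    [IsStrictTotalOrder β r] : Nonempty (((· < ·) : Fin (Fintype.card β) → _ → Prop) ≃r r) := by
  classical
  let := linearOrderOfSTO r
  exact ⟨(monoEquivOfFin β rfl).toRelIsoLT⟩

def IsStrongOrdering {α : Type*} (E : Finset (Finset α)) (ltV : α → α → Prop)
    (ltE : Finset α → Finset α → Prop) : Prop :=
  ∀ v v' : α, ∀ e e' : Finset α, e ∈ E → e' ∈ E → ltV v v' → ltE e e' →
    v ∈ e → v' ∈ e' → v ∈ e' ∧ v' ∈ e

theorem IsStrongOrdering.mem_of_lt_of_lt {α : Type*} {E : Finset (Finset α)}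
    {ltV : α → α → Prop} [Std.Trichotomous ltV] {ltE : Finset α → Finset α → Prop}
    (strong : IsStrongOrdering E ltV ltE) {x y z : Finset α} (hx : x ∈ E) (hy : y ∈ E)
    (hz : z ∈ E) (hy₀ : y.Nonempty) (hxy : ltE x y) (hyz : ltE y z) {v : α} (hvx : v ∈ x)
    (hvz : v ∈ z) : v ∈ y := by
  obtain ⟨w, hw⟩ := hy₀
  rcases trichotomous_of ltV v w with hvw | rfl | hwv
  · exact (strong v w x y hx hy hvw hxy hvx hw).1
  · exact hw
  · exact (strong w v y z hy hz hwv hyz hw hvz).2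

open SimpleGraph in
omit [DecidableEq V] in
theorem hasJoinPath_of_ordConnected {ι : Type*} [LinearOrder ι] [SuccOrder ι]
    [IsSuccArchimedean ι] (E : Finset (Finset V)) (hE : E.Nonempty) (e : ι ≃ {f // f ∈ E})
    (hconv : ∀ v : V, (e ⁻¹' {f | v ∈ f.1}).OrdConnected) : HasJoinPath E := by
  have : Nonempty ι := e.nonempty_congr.2 hE.coe_sort
  let φ := Iso.map e (hasse ι)
  have htree : ((hasse ι).map e).IsTree :=
    φ.isTree_iff.1 ⟨⟨hasse_preconnected_of_succ ι⟩, isAcyclic_hasse⟩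
  refine ⟨⟨_, htree, fun v => ?_⟩, fun f => ?_⟩
  · have := hconv v
    exact (φ.induce e.bijective.bijOn_preimage).preconnected_iff.1 (preconnected_induce_hasse _)
  · obtain ⟨i, rfl⟩ := e.surjective f
    calc (((hasse ι).map e).neighborSet (φ i)).ncard
        = (φ '' (hasse ι).neighborSet i).ncard := by rw [φ.image_neighborSet]
      _ = ((hasse ι).neighborSet i).ncard := Set.ncard_image_of_injective _ φ.injective
      _ ≤ 2 := ncard_neighborSet_hasse_le_two i

/-- every hypergraph without empty hyperedges whose incidence graph is a
bipartite permutation graph (i.e. admits a strong ordering) has a join path. -/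
theorem stmt1 (E : Finset (Finset V)) (hE : E.Nonempty) (hne : ∅ ∉ E)
    (ltV : V → V → Prop) (ltE : Finset V → Finset V → Prop)
    (hV : IsStrictTotalOrder V ltV)
    (hEirr : ∀ a ∈ E, ¬ ltE a a)
    (hEtrans : ∀ a ∈ E, ∀ b ∈ E, ∀ c ∈ E, ltE a b → ltE b c → ltE a c)
    (hEtot : ∀ a ∈ E, ∀ b ∈ E, a ≠ b → ltE a b ∨ ltE b a)
    (strong : ∀ v v' : V, ∀ e e' : Finset V, e ∈ E → e' ∈ E → ltV v v' → ltE e e' →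
      v ∈ e → v' ∈ e' → v ∈ e' ∧ v' ∈ e) :
    HasJoinPath E := by
  have hS : IsStrictTotalOrder {f // f ∈ E} fun a b => ltE a.1 b.1 :=
    { irrefl := fun a => hEirr a.1 a.2
      trans := fun a b c => hEtrans a.1 a.2 b.1 b.2 c.1 c.2
      trichotomous := fun a b hab hba => by_contra fun hab_ne =>
        (hEtot a.1 a.2 b.1 b.2 (hab_ne ∘ Subtype.ext)).elim hab hba }
  obtain ⟨e⟩ := exists_relIso_fin_of_isStrictTotalOrder fun a b : {f // f ∈ E} => ltE a.1 b.1
  refine hasJoinPath_of_ordConnected E hE e.toEquiv fun v => ⟨fun i hi j hj k ⟨hik, hkj⟩ => ?_⟩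
  rcases hik.eq_or_lt with rfl | hik
  · exact hi
  rcases hkj.eq_or_lt with rfl | hkj
  · exact hj
  have hk : (e k).1.Nonempty := Finset.nonempty_iff_ne_empty.2 fun h => hne (h ▸ (e k).2)
  exact IsStrongOrdering.mem_of_lt_of_lt strong (e i).2 (e k).2 (e j).2 hk (e.map_rel_iff.2 hik)
    (e.map_rel_iff.2 hkj) hi hj
end

section
/- Let φ₁, …, φ_k be formulas with pairwise disjoint variable sets X₁, …, X_k, all contained in X, and let a : X₀ → {0,1} with X₀ ⊆ X and aᵢ = a|_{Xᵢ}. Then S_X(⋁_{j=1}^k φ_j, a) = 2^{|X \ (X₀ ∪ X₁ ∪ … ∪ X_k)|} · Σ_{i=1}^k S_{Xᵢ}(φᵢ,aᵢ) · Π_{j=1}^{i−1} (2^{|X_j \ X₀|} − S_{X_j}(φ_j,a_j)) · Π_{j=i+1}^{k} 2^{|X_j \ X₀|}. -/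
/-!
Split the assignments on `X` consistent with `a` into those satisfying some `φᵢ` and those
satisfying none. As the `Xᵢ` are disjoint, counting is multiplicative over the blocks `Xᵢ` and the
free variables `F = X \ (X₀ ∪ ⋃ Xᵢ)`: with `Tᵢ = 2^|Xᵢ \ X₀|` there are `2^|F| ∏ Tᵢ` assignments in
all and `2^|F| ∏ (Tᵢ - Sᵢ)` satisfying no `φᵢ`. Expanding `∏ Tᵢ = ∏ ((Tᵢ - Sᵢ) + Sᵢ)` according to
the first index `i` at which the summand `Sᵢ` is chosen gives the stated sum.
-/

variable {V : Type} [DecidableEq V] [Fintype V]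

/-- A (Boolean) formula/relational constraint: a set of variables together with a
satisfaction predicate that only depends on those variables. -/
structure Fmla (V : Type) [DecidableEq V] where
  vars : Finset V
  sat : (V → Bool) → Prop
  localOnly : ∀ b b' : V → Bool, (∀ x ∈ vars, b x = b' x) → (sat b ↔ sat b')

open Classical in
/-- `Sol X X₀ a φ` is the set of assignments `b` on `X` (encoded as total Boolean
functions that are `false` outside `X`) satisfying `φ` and consistent with the
partial assignment `a` whose domain is `X₀` (i.e. agreeing with `a` on `X ∩ X₀`). -/
noncomputable def Sol (X X₀ : Finset V) (a : V → Bool) (φ : Fmla V) :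
    Finset (V → Bool) :=
  Finset.univ.filter fun b =>
    (∀ x, x ∉ X → b x = false) ∧ φ.sat b ∧ ∀ x ∈ X ∩ X₀, b x = a x

/-- `S X X₀ a φ = |Sol X X₀ a φ|`. -/
noncomputable def S (X X₀ : Finset V) (a : V → Bool) (φ : Fmla V) : ℕ :=
  (Sol X X₀ a φ).card

/-- Disjunction of two formulas. -/
def Fmla.or (φ ψ : Fmla V) : Fmla V where
  vars := φ.vars ∪ ψ.vars
  sat b := φ.sat b ∨ ψ.sat b
  localOnly b b' h := by
    have h1 := φ.localOnly b b' fun x hx => h x (Finset.mem_union_left _ hx)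
    have h2 := ψ.localOnly b b' fun x hx => h x (Finset.mem_union_right _ hx)
    tauto

/-- Disjunction of a family of formulas. -/
def Fmla.disj {k : ℕ} (φ : Fin k → Fmla V) : Fmla V where
  vars := Finset.univ.biUnion fun i => (φ i).vars
  sat b := ∃ i, (φ i).sat b
  localOnly b b' h := by
    constructor
    · rintro ⟨i, hi⟩
      exact ⟨i, ((φ i).localOnly b b' fun x hx =>
        h x (Finset.mem_biUnion.2 ⟨i, Finset.mem_univ _, hx⟩)).1 hi⟩
    · rintro ⟨i, hi⟩
      exact ⟨i, ((φ i).localOnly b b' fun x hx =>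
        h x (Finset.mem_biUnion.2 ⟨i, Finset.mem_univ _, hx⟩)).2 hi⟩

namespace Fmla

@[simps vars]
def neg (φ : Fmla V) : Fmla V where
  vars := φ.vars
  sat b := ¬ φ.sat b
  localOnly b b' h := not_congr (φ.localOnly b b' h)

/-- The constant `true`, with `Y` as its nominal set of variables. -/
@[simps vars]
def top (Y : Finset V) : Fmla V where
  vars := Y
  sat _ := True
  localOnly _ _ _ := Iff.rfl

def and (φ ψ : Fmla V) : Fmla V where
  vars := φ.vars ∪ ψ.vars
  sat b := φ.sat b ∧ ψ.sat b
  localOnly b b' h :=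
    and_congr (φ.localOnly b b' fun x hx => h x (Finset.mem_union_left _ hx))
      (ψ.localOnly b b' fun x hx => h x (Finset.mem_union_right _ hx))

def conj {ι : Type*} (s : Finset ι) (φ : ι → Fmla V) : Fmla V where
  vars := s.biUnion fun i => (φ i).vars
  sat b := ∀ i ∈ s, (φ i).sat b
  localOnly b b' h := forall₂_congr fun i hi =>
    (φ i).localOnly b b' fun x hx => h x (Finset.mem_biUnion.2 ⟨i, hi, hx⟩)

end Fmla

open Finset Fmla

theorem Finset.prod_add_ordered' {ι R : Type*} [CommSemiring R] [LinearOrder ι] (s : Finset ι)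
    (f g : ι → R) :
    ∏ i ∈ s, (f i + g i) =
      ∏ i ∈ s, f i + ∑ i ∈ s, g i * (∏ j ∈ s with j < i, f j) * ∏ j ∈ s with i < j, (f j + g j) :=
  (prod_add_ordered (ι := ιᵒᵈ) s f g).trans <|
    congrArg _ (sum_congr rfl fun _ _ => mul_right_comm _ _ _)

section Counting

variable {X Y W : Finset V} {a b : V → Bool} {φ ψ : Fmla V}

theorem mem_Sol : b ∈ Sol X W a φ ↔
    (∀ x, x ∉ X → b x = false) ∧ φ.sat b ∧ ∀ x ∈ X ∩ W, b x = a x := by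
  simp [Sol]

theorem S_congr (h : ∀ b, φ.sat b ↔ ψ.sat b) : S X W a φ = S X W a ψ := by
  rw [S, S]
  congr 1
  ext b
  simp only [mem_Sol, h]

theorem S_inter_right : S X (W ∩ X) a φ = S X W a φ := by
  rw [S, S]
  congr 1
  ext b
  simp only [mem_Sol, inter_comm W X, ← inter_assoc, inter_self]

theorem S_of_forall_sat (h : ∀ b, φ.sat b) : S X W a φ = 2 ^ (X \ W).card := by
  rw [← card_powerset]
  -- a consistent assignment is determined by the variables of `X \ W` it sets to `true`
  refine card_nbij' (fun b => {x ∈ X \ W | b x})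
    (fun t x => if x ∈ X ∩ W then a x else decide (x ∈ t)) ?_ ?_ ?_ ?_
  · intro b _
    exact mem_powerset.2 (filter_subset _ _)
  · intro t ht
    rw [mem_coe, mem_powerset] at ht
    refine mem_Sol.2 ⟨fun x hx => ?_, h _, fun x hx => if_pos hx⟩
    grind
  · intro b hb
    obtain ⟨hsupp, -, hagree⟩ := mem_Sol.1 hb
    funext x
    grind
  · intro t ht
    rw [mem_coe, mem_powerset] at ht
    ext x
    grind

theorem S_top : S X W a (top Y) = 2 ^ (X \ W).card :=
  S_of_forall_sat fun _ => trivial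

theorem S_add_S_of_sat_iff_not (h : ∀ b, ψ.sat b ↔ ¬ φ.sat b) :
    S X W a φ + S X W a ψ = 2 ^ (X \ W).card := by
  classical
  rw [← S_top (Y := ∅), S, S, S,
    ← card_filter_add_card_filter_not (s := Sol X W a (top ∅)) φ.sat]
  congr 2 <;> ext b <;> simp only [mem_filter, mem_Sol, top, h, true_and] <;> tauto

theorem S_neg : S X W a φ.neg = 2 ^ (X \ W).card - S X W a φ :=
  Nat.eq_sub_of_add_eq' (S_add_S_of_sat_iff_not fun _ => Iff.rfl)

theorem S_le_two_pow : S X W a φ ≤ 2 ^ (X \ W).card :=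
  (S_add_S_of_sat_iff_not (ψ := φ.neg) fun _ => Iff.rfl) ▸ Nat.le_add_right _ _

theorem piecewise_mem_Sol (hφ : φ.vars ⊆ X) (hsat : φ.sat b)
    (hagree : ∀ x ∈ X ∩ W, b x = a x) : X.piecewise b (fun _ => false) ∈ Sol X W a φ := by
  refine mem_Sol.2 ⟨fun x hx => piecewise_eq_of_notMem _ _ _ hx, ?_, fun x hx => ?_⟩
  · exact (φ.localOnly _ _ fun x hx => piecewise_eq_of_mem _ _ _ (hφ hx)).2 hsat
  · rw [piecewise_eq_of_mem _ _ _ (mem_inter.1 hx).1, hagree x hx]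

theorem S_and (hXY : Disjoint X Y) (hφ : φ.vars ⊆ X) (hψ : ψ.vars ⊆ Y) :
    S (X ∪ Y) W a (φ.and ψ) = S X W a φ * S Y W a ψ := by
  rw [S, S, S, ← card_product]
  have hY : ∀ x ∈ Y, x ∉ X := fun x hx hxX => disjoint_left.1 hXY hxX hx
  refine card_nbij' (fun b => (X.piecewise b fun _ => false, Y.piecewise b fun _ => false))
    (fun p => X.piecewise p.1 p.2) ?_ ?_ ?_ ?_
  · intro b hb
    obtain ⟨-, ⟨hφb, hψb⟩, hagree⟩ := mem_Sol.1 hb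
    exact mem_product.2 ⟨piecewise_mem_Sol hφ hφb fun x hx => hagree x (by grind),
      piecewise_mem_Sol hψ hψb fun x hx => hagree x (by grind)⟩
  · rintro ⟨b₁, b₂⟩ hp
    obtain ⟨⟨supp₁, sat₁, agree₁⟩, ⟨supp₂, sat₂, agree₂⟩⟩ :=
      And.imp mem_Sol.1 mem_Sol.1 (mem_product.1 hp)
    refine mem_Sol.2 ⟨fun x hx => ?_, ⟨?_, ?_⟩, fun x hx => ?_⟩
    · grind [piecewise_eq_of_notMem]
    · exact (φ.localOnly _ _ fun x hx => piecewise_eq_of_mem _ _ _ (hφ hx)).2 sat₁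
    · exact (ψ.localOnly _ _ fun x hx => piecewise_eq_of_notMem _ _ _ (hY x (hψ hx))).2 sat₂
    · grind [piecewise_eq_of_mem, piecewise_eq_of_notMem]
  · intro b hb
    have hsupp := (mem_Sol.1 hb).1
    funext x
    grind [piecewise_eq_of_mem, piecewise_eq_of_notMem]
  · rintro ⟨b₁, b₂⟩ hp
    obtain ⟨supp₁, supp₂⟩ := And.imp (fun h => (mem_Sol.1 h).1) (fun h => (mem_Sol.1 h).1)
      (mem_product.1 hp)
    ext x <;> simp only [piecewise] <;> grind

theorem S_eq_two_pow_mul (hφ : φ.vars ⊆ X) :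
    S X W a φ = 2 ^ (X \ (W ∪ φ.vars)).card * S φ.vars W a φ := by
  calc S X W a φ = S ((X \ φ.vars) ∪ φ.vars) W a ((top ∅).and φ) := by
        rw [sdiff_union_of_subset hφ]
        exact S_congr fun _ => (and_iff_right trivial).symm
    _ = 2 ^ (X \ (W ∪ φ.vars)).card * S φ.vars W a φ := by
        rw [S_and sdiff_disjoint (empty_subset _) subset_rfl, S_top, sdiff_sdiff_left,
          sup_eq_union, union_comm]

theorem S_conj {ι : Type*} [DecidableEq ι] (s : Finset ι) (φ : ι → Fmla V)
    (hd : (s : Set ι).PairwiseDisjoint fun i => (φ i).vars) :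
    S (conj s φ).vars W a (conj s φ) = ∏ i ∈ s, S (φ i).vars W a (φ i) := by
  induction s using Finset.induction_on with
  | empty => simp [S_of_forall_sat, conj]
  | insert i s hi ih =>
    rw [prod_insert hi, ← ih (hd.subset (by simp))]
    calc S (conj (insert i s) φ).vars W a (conj (insert i s) φ)
        = S ((φ i).vars ∪ (conj s φ).vars) W a ((φ i).and (conj s φ)) := by
          rw [show (conj (insert i s) φ).vars = _ from biUnion_insert]
          exact S_congr fun b => forall_mem_insert _ _ _
      _ = _ := S_and ((disjoint_biUnion_right _ _ _).2 fun j hj =>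
          hd (mem_insert_self i s) (mem_insert_of_mem hj) (ne_of_mem_of_not_mem hj hi).symm)
          subset_rfl subset_rfl

theorem S_conj_eq_two_pow_mul_prod {ι : Type*} [DecidableEq ι] (s : Finset ι) (φ : ι → Fmla V)
    (hd : (s : Set ι).PairwiseDisjoint fun i => (φ i).vars) (hX : ∀ i ∈ s, (φ i).vars ⊆ X) :
    S X W a (conj s φ) =
      2 ^ (X \ (W ∪ s.biUnion fun i => (φ i).vars)).card * ∏ i ∈ s, S (φ i).vars W a (φ i) := by
  rw [S_eq_two_pow_mul (biUnion_subset.2 hX), S_conj s φ hd]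
  rfl

end Counting

theorem stmt5_general (k : ℕ) (φ : Fin k → Fmla V) (X X₀ : Finset V)
    (hd : ∀ i j : Fin k, i ≠ j → Disjoint (φ i).vars (φ j).vars)
    (hX : ∀ i, (φ i).vars ⊆ X) (a : V → Bool) :
    S X X₀ a (Fmla.disj φ) =
      2 ^ (X \ (X₀ ∪ Finset.univ.biUnion fun i => (φ i).vars)).card *
        ∑ i : Fin k,
          S (φ i).vars (X₀ ∩ (φ i).vars) a (φ i) *
          (∏ j ∈ Finset.univ.filter (fun j : Fin k => j < i),
            (2 ^ ((φ j).vars \ X₀).card - S (φ j).vars (X₀ ∩ (φ j).vars) a (φ j))) *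
          (∏ j ∈ Finset.univ.filter (fun j : Fin k => i < j),
            2 ^ ((φ j).vars \ X₀).card) := by
  simp only [S_inter_right]
  have hd' : ((univ : Finset (Fin k)) : Set (Fin k)).PairwiseDisjoint fun i => (φ i).vars :=
    fun i _ j _ => hd i j
  have hX' : ∀ i ∈ univ, (φ i).vars ⊆ X := fun i _ => hX i
  have hall :=
    S_conj_eq_two_pow_mul_prod (W := X₀) (a := a) univ (fun j => top (φ j).vars) hd' hX'
  rw [S_of_forall_sat (φ := conj univ fun j => top (φ j).vars) fun _ _ _ => trivial] at hall
  simp only [S_top, top_vars] at hall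
  have hnone :=
    S_conj_eq_two_pow_mul_prod (W := X₀) (a := a) univ (fun j => (φ j).neg) hd' hX'
  simp only [neg_vars, S_neg] at hnone
  have hsplit : S X X₀ a (disj φ) + S X X₀ a (conj univ fun j => (φ j).neg) =
      2 ^ (X \ X₀).card :=
    S_add_S_of_sat_iff_not fun b => by simp [conj, neg, disj]
  have htel := prod_add_ordered' univ
    (fun j => 2 ^ ((φ j).vars \ X₀).card - S (φ j).vars X₀ a (φ j))
    fun j => S (φ j).vars X₀ a (φ j)
  simp only [Nat.sub_add_cancel S_le_two_pow] at htel
  rw [hall, hnone, htel, mul_add] at hsplit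
  omega

/-- the number of solutions of a disjunction of formulas with pairwise
disjoint variable sets, relative to a partial assignment `a` on `X₀ ⊆ X`. -/
theorem stmt5 (k : ℕ) (φ : Fin k → Fmla V) (X X₀ : Finset V)
    (hd : ∀ i j : Fin k, i ≠ j → Disjoint (φ i).vars (φ j).vars)
    (hX : ∀ i, (φ i).vars ⊆ X) (hX₀ : X₀ ⊆ X) (a : V → Bool) :
    S X X₀ a (Fmla.disj φ) =
      2 ^ (X \ (X₀ ∪ Finset.univ.biUnion fun i => (φ i).vars)).card *
        ∑ i : Fin k,
          S (φ i).vars (X₀ ∩ (φ i).vars) a (φ i) *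
          (∏ j ∈ Finset.univ.filter (fun j : Fin k => j < i),
            (2 ^ ((φ j).vars \ X₀).card - S (φ j).vars (X₀ ∩ (φ j).vars) a (φ j))) *
          (∏ j ∈ Finset.univ.filter (fun j : Fin k => i < j),
            2 ^ ((φ j).vars \ X₀).card) :=
  stmt5_general k φ X X₀ hd hX a
end

section
/- Let H be a hypergraph with a disjoint branches decomposition T rooted in edge e. If vertices v₁ and v₂ appear in different trees T₁ and T₂ of the forest obtained by deleting e from T, then v₁ and v₂ lie in different connected components of H \ e. -/
variable {V : Type} [DecidableEq V]

lemma walk_induce {α : Type} (G : SimpleGraph α) (s : Set α) {a b : α}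
    (w : G.Walk a b) (h : ∀ x ∈ w.support, x ∈ s) (ha : a ∈ s) (hb : b ∈ s) :
    (G.induce s).Reachable ⟨a, ha⟩ ⟨b, hb⟩ := by
  induction w with
  | nil => exact SimpleGraph.Reachable.refl _
  | @cons u c b hadj w ih =>
    have hc : c ∈ s := h c (by simp)
    have hA : (G.induce s).Adj ⟨u, ha⟩ ⟨c, hc⟩ := by
      simpa using hadj
    exact hA.reachable.trans (ih (fun x hx => h x (by simp [hx])) hc hb)

lemma key_aux {E : Finset (Finset V)} {e : Finset V} (D : DBD E e)
    (a b : {f // f ∈ E}) (ha : a.1 ≠ e) (hb : b.1 ≠ e)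
    (hpath : onTreePath D.J.T ⟨e, D.rootMem⟩ b a) :
    (D.J.T.induce {g : {f // f ∈ E} | g.1 ≠ e}).Reachable ⟨a, ha⟩ ⟨b, hb⟩ := by
  set root : {f // f ∈ E} := ⟨e, D.rootMem⟩ with hroot
  have haroot : a ≠ root := fun h => ha (congrArg Subtype.val h)
  obtain ⟨w⟩ := D.J.isTree.isConnected.preconnected root b
  obtain ⟨p, hp⟩ := w.toPath
  have hasup : a ∈ p.support := hpath p hp
  set q := p.dropUntil a hasup with hq
  have hrootq : root ∉ q.support := by
    intro hrq
    have hspec := p.take_spec hasup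
    have hsupp : p.support = (p.takeUntil a hasup).support ++ q.support.tail := by
      conv_lhs => rw [← hspec]
      rw [SimpleGraph.Walk.support_append, hq]
    have hnd : p.support.Nodup := hp.support_nodup
    rw [hsupp] at hnd
    have hroot1 : root ∈ (p.takeUntil a hasup).support :=
      SimpleGraph.Walk.start_mem_support _
    have hroot2 : root ∈ q.support.tail := by
      have := q.support_eq_cons
      rw [this] at hrq
      rcases List.mem_cons.mp hrq with h | h
      · exact absurd h.symm haroot
      · exact h
    exact (List.disjoint_of_nodup_append hnd) hroot1 hroot2
  apply walk_induce _ _ q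
  intro x hx hxe
  exact hrootq (by
    have : x = root := Subtype.ext hxe
    rwa [this] at hx)

lemma key {E : Finset (Finset V)} {e : Finset V} (D : DBD E e)
    (a b : {f // f ∈ E}) (ha : a.1 ≠ e) (hb : b.1 ≠ e)
    (hint : (a.1 ∩ b.1).Nonempty) :
    (D.J.T.induce {g : {f // f ∈ E} | g.1 ≠ e}).Reachable ⟨a, ha⟩ ⟨b, hb⟩ := by
  by_cases hab : a = b
  · subst hab; exact SimpleGraph.Reachable.refl _
  · have hor : onTreePath D.J.T ⟨e, D.rootMem⟩ b a ∨ onTreePath D.J.T ⟨e, D.rootMem⟩ a b := by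
      by_contra h
      push_neg at h
      have := D.disj a b hab h.1 h.2
      rw [this] at hint
      exact absurd hint (by simp)
    rcases hor with h | h
    · exact key_aux D a b ha hb h
    · exact (key_aux D b a hb ha h).symm

/-- if `T` is a disjoint branches decomposition of `H` rooted in `e` and
vertices `v₁, v₂` appear in edges lying in different trees of the forest `T - e`,
then `v₁` and `v₂` lie in different connected components of `H \ e`. -/
theorem stmt7 (E : Finset (Finset V)) (e : Finset V) (D : DBD E e)
    (v₁ v₂ : V) (f₁ f₂ : Finset V)
    (hf₁ : f₁ ∈ E.erase e) (hf₂ : f₂ ∈ E.erase e)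
    (hv₁ : v₁ ∈ f₁) (hv₂ : v₂ ∈ f₂)
    (hsep : ¬ (D.J.T.induce {g : {f // f ∈ E} | g.1 ≠ e}).Reachable
        ⟨⟨f₁, Finset.mem_of_mem_erase hf₁⟩, (Finset.mem_erase.mp hf₁).1⟩
        ⟨⟨f₂, Finset.mem_of_mem_erase hf₂⟩, (Finset.mem_erase.mp hf₂).1⟩) :
    ¬ vtxLinked (E.erase e) v₁ v₂ := by
  intro hlink
  have hf₁E : f₁ ∈ E := Finset.mem_of_mem_erase hf₁
  have hf₁e : f₁ ≠ e := (Finset.mem_erase.mp hf₁).1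
  have main : ∀ w, vtxLinked (E.erase e) v₁ w → ∀ g, ∀ hg : g ∈ E, ∀ hge : g ≠ e, w ∈ g →
      (D.J.T.induce {g : {f // f ∈ E} | g.1 ≠ e}).Reachable
        ⟨⟨f₁, hf₁E⟩, hf₁e⟩ ⟨⟨g, hg⟩, hge⟩ := by
    intro w hw
    induction hw with
    | refl =>
      intro g hg hge hwg
      exact key D ⟨f₁, hf₁E⟩ ⟨g, hg⟩ hf₁e hge ⟨v₁, Finset.mem_inter.mpr ⟨hv₁, hwg⟩⟩
    | @tail x y hxy hR ih =>
      obtain ⟨h, hh, hxh, hyh⟩ := hR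
      have hhE : h ∈ E := Finset.mem_of_mem_erase hh
      have hhe : h ≠ e := (Finset.mem_erase.mp hh).1
      intro g hg hge hyg
      exact (ih h hhE hhe hxh).trans
        (key D ⟨h, hhE⟩ ⟨g, hg⟩ hhe hge ⟨y, Finset.mem_inter.mpr ⟨hyh, hyg⟩⟩)
  exact hsep (main v₂ hlink f₂ (Finset.mem_of_mem_erase hf₂) (Finset.mem_erase.mp hf₂).1 hv₂)
end

section
/- If a hypergraph H is db-rootable in edge e and H \ e = (V', E') is connected, then there exists e' ∈ E' with e ∩ V' ⊆ e'. -/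
variable {V : Type} [DecidableEq V]

section Stmt8Aux

open SimpleGraph

variable {α : Type} [DecidableEq α] {G : SimpleGraph α}

lemma getVert_one_mem_support {u v : α} (p : G.Walk u v) (h : 1 ≤ p.length) :
    p.getVert 1 ∈ p.support :=
  SimpleGraph.Walk.mem_support_iff_exists_getVert.mpr ⟨1, rfl, h⟩

lemma neighbor_eq_getVert_one (hG : G.IsTree) {r c f : α} (hc : G.Adj r c)
    {p : G.Walk r f} (hp : p.IsPath) (hm : c ∈ p.support) : p.getVert 1 = c := by
  have hq : (p.takeUntil c hm).IsPath := hp.takeUntil hm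
  have hedge : (SimpleGraph.Walk.cons hc SimpleGraph.Walk.nil : G.Walk r c).IsPath := by
    simp [SimpleGraph.Walk.cons_isPath_iff, hc.ne]
  have heq : p.takeUntil c hm = SimpleGraph.Walk.cons hc SimpleGraph.Walk.nil :=
    (hG.existsUnique_path r c).unique hq hedge
  have hlen : (p.takeUntil c hm).length = 1 := by rw [heq]; rfl
  conv_lhs => rw [← p.take_spec hm]
  rw [SimpleGraph.Walk.getVert_append, hlen]
  simp [SimpleGraph.Walk.getVert_zero]

lemma branch_iff (hG : G.IsTree) {r c f g : α} (hc : G.Adj r c) (hg : g ≠ r)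
    {p : G.Walk r f} (hp : p.IsPath) (hm : g ∈ p.support) :
    c ∈ p.support ↔ c ∈ (p.takeUntil g hm).support := by
  constructor
  · intro hcp
    have h1 : p.getVert 1 = c := neighbor_eq_getVert_one hG hc hp hcp
    have hq0 : (p.takeUntil g hm).length ≠ 0 := fun h =>
      hg ((p.takeUntil g hm).eq_of_length_eq_zero h).symm
    by_cases h2 : 1 < (p.takeUntil g hm).length
    · have h3 : (p.takeUntil g hm).getVert 1 = c := by
        rw [← h1]
        conv_rhs => rw [← p.take_spec hm]
        rw [SimpleGraph.Walk.getVert_append, if_pos h2]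
      exact h3 ▸ getVert_one_mem_support _ (le_of_lt h2)
    · have hq1 : (p.takeUntil g hm).length = 1 := by omega
      have h3 : c = g := by
        rw [← h1]
        conv_lhs => rw [← p.take_spec hm]
        rw [SimpleGraph.Walk.getVert_append, hq1]
        simp [SimpleGraph.Walk.getVert_zero]
      rw [h3]
      exact SimpleGraph.Walk.end_mem_support _
  · exact fun h => p.support_takeUntil_subset hm h

end Stmt8Aux

/-- if `H` is db-rootable in `e` and `H \ e` is connected, then some
edge `e'` of `H \ e` contains `e ∩ V'` where `V'` is the vertex set of `H \ e`. -/
theorem stmt8 (E : Finset (Finset V)) (e : Finset V) (h : DbRootable E e)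
    (hne : (E.erase e).Nonempty) (hconn : HGConnected (E.erase e)) :
    ∃ e' ∈ E.erase e, e ∩ (E.erase e).sup id ⊆ e' := by
  classical
  obtain ⟨D⟩ := h
  set T := D.J.T with hTdef
  have htree := D.J.isTree
  set r : {f // f ∈ E} := ⟨e, D.rootMem⟩ with hrdef
  choose P hP hU using fun f => htree.existsUnique_path r f
  -- Step lemma: intersecting non-root edges lie on the same branch
  have key : ∀ c : {f // f ∈ E}, T.Adj r c → ∀ x y : {f // f ∈ E}, x ≠ r → y ≠ r →
      (x.1 ∩ y.1).Nonempty → (c ∈ (P x).support ↔ c ∈ (P y).support) := by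
    intro c hc x y hx hy hxy
    by_cases hxy' : x = y
    · subst hxy'; rfl
    by_cases h1 : onTreePath T r y x
    · -- x is on the path from r to y
      have hm : x ∈ (P y).support := h1 (P y) (hP y)
      have hiff := branch_iff htree hc hx (hP y) hm
      have heq : (P y).takeUntil x hm = P x := hU x _ ((hP y).takeUntil hm)
      rw [heq] at hiff
      exact hiff.symm
    by_cases h2 : onTreePath T r x y
    · have hm : y ∈ (P x).support := h2 (P x) (hP x)
      have hiff := branch_iff htree hc hy (hP x) hm
      have heq : (P x).takeUntil y hm = P y := hU y _ ((hP x).takeUntil hm)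
      rw [heq] at hiff
      exact hiff
    · exact absurd (D.disj x y hxy' h1 h2) (by
        intro hcon
        rw [hcon] at hxy
        exact Finset.not_nonempty_empty hxy)
  -- Chain lemma: the invariant propagates along edgeLinked chains
  have chain : ∀ c0 : {f // f ∈ E}, T.Adj r c0 → ∀ a b : Finset V,
      edgeLinked (E.erase e) a b →
      ∀ (ha : a ∈ E) (hb : b ∈ E), a ≠ e → b ≠ e →
      (c0 ∈ (P ⟨a, ha⟩).support ↔ c0 ∈ (P ⟨b, hb⟩).support) := by
    intro c0 hc0 a b hab
    induction hab with
    | refl => intro ha hb _ _; rfl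
    | @tail m b hRT hstep ih =>
      intro ha hb hane hbne
      obtain ⟨hm', hb', hnon⟩ := hstep
      have hmE : m ∈ E := Finset.mem_of_mem_erase hm'
      have hmne : m ≠ e := Finset.ne_of_mem_erase hm'
      have hx : (⟨m, hmE⟩ : {f // f ∈ E}) ≠ r := fun hh =>
        hmne (congrArg Subtype.val hh)
      have hy : (⟨b, hb⟩ : {f // f ∈ E}) ≠ r := fun hh =>
        hbne (congrArg Subtype.val hh)
      exact (ih ha hmE hane hmne).trans (key c0 hc0 ⟨m, hmE⟩ ⟨b, hb⟩ hx hy hnon)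
  -- The root has at most one neighbour
  have nbr_sub : ∀ c1 c2 : {f // f ∈ E}, T.Adj r c1 → T.Adj r c2 → c1 = c2 := by
    intro c1 c2 h1 h2
    have hc1e : c1.1 ≠ e := fun hh => h1.ne' (Subtype.ext hh)
    have hc2e : c2.1 ≠ e := fun hh => h2.ne' (Subtype.ext hh)
    have hm1 : c1.1 ∈ E.erase e := Finset.mem_erase.mpr ⟨hc1e, c1.2⟩
    have hm2 : c2.1 ∈ E.erase e := Finset.mem_erase.mpr ⟨hc2e, c2.2⟩
    have hlink := hconn c1.1 hm1 c2.1 hm2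
    have hchain := chain c1 h1 c1.1 c2.1 hlink c1.2 c2.2 hc1e hc2e
    have hQ1 : c1 ∈ (P c1).support := SimpleGraph.Walk.end_mem_support _
    have hQ2 : c1 ∈ (P c2).support := hchain.mp hQ1
    have hpath2 : (SimpleGraph.Walk.cons h2 SimpleGraph.Walk.nil : T.Walk r c2).IsPath := by
      simp [SimpleGraph.Walk.cons_isPath_iff, h2.ne]
    have heq2 : (SimpleGraph.Walk.cons h2 SimpleGraph.Walk.nil : T.Walk r c2) = P c2 :=
      hU c2 _ hpath2
    rw [← heq2] at hQ2
    simp only [SimpleGraph.Walk.support_cons, SimpleGraph.Walk.support_nil,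
      List.mem_cons, List.mem_singleton] at hQ2
    rcases hQ2 with hQ2 | hQ2 | hQ2
    · exact absurd hQ2 h1.ne'
    · exact hQ2
    · exact absurd hQ2 (by simp)
  -- Obtain the (unique) neighbour of the root
  obtain ⟨f0, hf0⟩ := hne
  have hf0E : f0 ∈ E := Finset.mem_of_mem_erase hf0
  have hf0ne : f0 ≠ e := Finset.ne_of_mem_erase hf0
  have hrnf : r ≠ (⟨f0, hf0E⟩ : {f // f ∈ E}) := fun hh =>
    hf0ne (congrArg Subtype.val hh).symm
  obtain ⟨w⟩ := htree.isConnected.preconnected r ⟨f0, hf0E⟩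
  have hlenw : 0 < w.length :=
    Nat.pos_of_ne_zero fun hh => hrnf (w.eq_of_length_eq_zero hh)
  have hadj : T.Adj r (w.getVert 1) := by
    have := w.adj_getVert_succ (i := 0) hlenw
    rwa [SimpleGraph.Walk.getVert_zero] at this
  set c := w.getVert 1 with hcdef
  refine ⟨c.1, Finset.mem_erase.mpr ⟨fun hh => hadj.ne' (Subtype.ext hh), c.2⟩, ?_⟩
  intro v hv
  rw [Finset.mem_inter] at hv
  obtain ⟨hve, hvsup⟩ := hv
  rw [Finset.mem_sup] at hvsup
  obtain ⟨f, hfmem, hvf⟩ := hvsup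
  have hfE : f ∈ E := Finset.mem_of_mem_erase hfmem
  have hfne : f ≠ e := Finset.ne_of_mem_erase hfmem
  have hrS : r ∈ {g : {f // f ∈ E} | v ∈ g.1} := hve
  have hfS : (⟨f, hfE⟩ : {f // f ∈ E}) ∈ {g : {f // f ∈ E} | v ∈ g.1} := hvf
  obtain ⟨W0⟩ := D.J.conn v ⟨r, hrS⟩ ⟨⟨f, hfE⟩, hfS⟩
  let emb := SimpleGraph.Embedding.induce (G := T) {g : {f // f ∈ E} | v ∈ g.1}
  set W : T.Walk r ⟨f, hfE⟩ := W0.map emb.toHom with hWdef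
  have hWne : r ≠ (⟨f, hfE⟩ : {f // f ∈ E}) := fun hh =>
    hfne (congrArg Subtype.val hh).symm
  have hlenb : 0 < W.bypass.length :=
    Nat.pos_of_ne_zero fun hh => hWne (W.bypass.eq_of_length_eq_zero hh)
  have hadjb : T.Adj r (W.bypass.getVert 1) := by
    have := W.bypass.adj_getVert_succ (i := 0) hlenb
    rwa [SimpleGraph.Walk.getVert_zero] at this
  have hc1 : W.bypass.getVert 1 = c := nbr_sub _ _ hadjb hadj
  have hmemb : c ∈ W.bypass.support := hc1 ▸ getVert_one_mem_support _ hlenb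
  have hmem : c ∈ W.support := W.support_bypass_subset hmemb
  have hmem' : c ∈ (W0.map emb.toHom).support := hmem
  rw [SimpleGraph.Walk.support_map] at hmem'
  obtain ⟨x, hx, hxc⟩ := List.mem_map.mp hmem'
  have hxv : v ∈ (x.1 : {f // f ∈ E}).1 := x.2
  have hxc' : (x.1 : {f // f ∈ E}) = c := hxc
  rw [hxc'] at hxv
  exact hxv
end

section
/- A hypergraph H = (V,E) is db-rootable in an edge e ∈ E if and only if for every connected component C = (V_C, E_C) of H \ e, the hypergraph (V_C ∪ e, E_C ∪ {e}) is db-rootable in e. -/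
variable {V : Type} [DecidableEq V]

/-!
A rooted tree on a finite node set is the same thing as a parent map whose iterates reach the
root, and "`a` lies on the path from the root to `b`" then means that `a` is an iterate of the
parent map at `b`. In this language both directions are constructions of parent maps.

Given a decomposition of `H`, give each edge of `C` as new parent its nearest proper ancestor
in `C ∪ {e}`. Ancestry between edges of `C ∪ {e}` is unchanged, so disjointness of branches
survives; and every edge through a vertex of an edge of `C` lies in `C ∪ {e}`, so the edges
through a vertex stay connected.

Conversely, the parent maps of the decompositions of the `C ∪ {e}` agree on `e` and glue to a
parent map on `H`. Two edges sharing a vertex lie in a common `C ∪ {e}`, where connectivity and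
disjointness were already known.
-/

open SimpleGraph Function

section ParentMaps

variable {α : Type*}

structure IsParentMap (Q : α → α) (r : α) : Prop where
  map_root : Q r = r
  exists_iterate_eq_root : ∀ a, ∃ n, Q^[n] a = r

def parentGraph (Q : α → α) : SimpleGraph α := fromRel fun a b => Q a = b

lemma parentGraph_adj {Q : α → α} {a b : α} :
    (parentGraph Q).Adj a b ↔ a ≠ b ∧ (Q a = b ∨ Q b = a) :=
  fromRel_adj _ _ _

namespace IsParentMap

variable {Q : α → α} {r : α}

lemma of_lt (hr : Q r = r) (m : α → ℕ) (hm : ∀ a, a ≠ r → m (Q a) < m a) :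
    IsParentMap Q r := by
  refine ⟨hr, fun a => ?_⟩
  induction h : m a using Nat.strong_induction_on generalizing a with
  | _ k ih =>
    by_cases ha : a = r
    · exact ⟨0, ha⟩
    · obtain ⟨n, hn⟩ := ih _ (h ▸ hm a ha) (Q a) rfl
      exact ⟨n + 1, hn⟩

variable (hQ : IsParentMap Q r)
include hQ

lemma eq_root_of_isPeriodicPt {n : ℕ} {a : α} (ha : IsPeriodicPt Q (n + 1) a) : a = r := by
  obtain ⟨k, hk⟩ := hQ.exists_iterate_eq_root a
  calc a = Q^[n * k + k] a := by rw [← Nat.succ_mul]; exact (ha.mul_const k).eq.symm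
    _ = r := by rw [iterate_add_apply, hk, iterate_fixed hQ.map_root]

lemma map_ne_self {a : α} (ha : a ≠ r) : Q a ≠ a :=
  fun h => ha (hQ.eq_root_of_isPeriodicPt (n := 0) h)

lemma exists_isPath (b : α) :
    ∃ p : (parentGraph Q).Walk b r, p.IsPath ∧ ∀ a, a ∈ p.support ↔ ∃ n, Q^[n] b = a := by
  obtain ⟨n, hn⟩ := hQ.exists_iterate_eq_root b
  induction n generalizing b with
  | zero =>
    obtain rfl : b = r := hn
    refine ⟨Walk.nil, Walk.IsPath.nil, fun a => ?_⟩
    simp only [Walk.support_nil, List.mem_singleton, iterate_fixed hQ.map_root]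
    exact ⟨fun h => ⟨0, h.symm⟩, fun ⟨_, h⟩ => h.symm⟩
  | succ n ih =>
    by_cases hb : b = r
    · exact ih b (by rw [hb, iterate_fixed hQ.map_root])
    obtain ⟨p, hp, hsupp⟩ := ih (Q b) hn
    have hadj : (parentGraph Q).Adj b (Q b) :=
      parentGraph_adj.2 ⟨(hQ.map_ne_self hb).symm, Or.inl rfl⟩
    refine ⟨Walk.cons hadj p, hp.cons fun hmem => ?_, fun a => ?_⟩
    · obtain ⟨k, hk⟩ := (hsupp b).1 hmem
      exact hb (hQ.eq_root_of_isPeriodicPt (n := k) hk)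
    · rw [Walk.support_cons, List.mem_cons, hsupp]
      constructor
      · rintro (rfl | ⟨k, rfl⟩)
        exacts [⟨0, rfl⟩, ⟨k + 1, rfl⟩]
      · rintro ⟨_ | k, rfl⟩
        exacts [Or.inl rfl, Or.inr ⟨k, rfl⟩]

lemma isTree [Finite α] : (parentGraph Q).IsTree := by
  have hconn : (parentGraph Q).Connected := by
    have hreach : ∀ a, (parentGraph Q).Reachable a r :=
      fun a => (hQ.exists_isPath a).elim fun p _ => p.reachable
    exact (connected_iff _).2 ⟨fun a b => (hreach a).trans (hreach b).symm, ⟨r⟩⟩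
  rw [isTree_iff_connected_and_card]
  refine ⟨hconn, le_antisymm ?_ hconn.card_vert_le_card_edgeSet_add_one⟩
  -- `a ↦ s(a, Q a)` maps the non-root vertices onto the edges
  have hedge : ∀ a : {a // a ≠ r}, s(a.1, Q a.1) ∈ (parentGraph Q).edgeSet :=
    fun a => parentGraph_adj.2 ⟨(hQ.map_ne_self a.2).symm, Or.inl rfl⟩
  have hsurj : Surjective fun a : {a // a ≠ r} => (⟨_, hedge a⟩ : (parentGraph Q).edgeSet) := by
    rintro ⟨e, he⟩
    induction e using Sym2.ind with | _ x y =>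
    obtain ⟨hne, rfl | rfl⟩ := parentGraph_adj.1 ((mem_edgeSet _).1 he)
    · exact ⟨⟨x, fun h => hne (by rw [h, hQ.map_root])⟩, rfl⟩
    · exact ⟨⟨y, fun h => hne (by rw [h, hQ.map_root])⟩, Subtype.ext Sym2.eq_swap⟩
  have := Fintype.ofFinite α
  classical
  calc Nat.card (parentGraph Q).edgeSet + 1 ≤ Nat.card {a // a ≠ r} + 1 :=
        Nat.add_le_add_right (Nat.card_le_card_of_surjective _ hsurj) 1
    _ = Nat.card α := by
        rw [Nat.card_eq_fintype_card, Nat.card_eq_fintype_card, Fintype.card_subtype_compl,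
          Fintype.card_subtype_eq]
        have := Fintype.card_pos_iff.2 ⟨r⟩
        omega

end IsParentMap

lemma SimpleGraph.IsTree.exists_isParentMap [Finite α] {G : SimpleGraph α} (hG : G.IsTree)
    (r : α) : ∃ Q, IsParentMap Q r ∧ G = parentGraph Q := by
  have hstep : ∀ a, a ≠ r → ∃ b, G.Adj a b ∧ G.dist b r < G.dist a r := by
    intro a ha
    obtain ⟨p, hp⟩ := hG.connected.exists_walk_length_eq_dist a r
    obtain ⟨b, hab, q, rfl⟩ := Walk.exists_eq_cons_of_ne ha p
    have := dist_le q
    rw [Walk.length_cons] at hp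
    exact ⟨b, hab, by omega⟩
  classical
  choose! parent hadj hlt using hstep
  let Q a := if a = r then r else parent a
  have hQ : IsParentMap Q r :=
    .of_lt (if_pos rfl) (G.dist · r) fun a ha => by simpa [Q, ha] using hlt a ha
  have hQadj : ∀ a, a ≠ Q a → G.Adj a (Q a) := by
    intro a ha
    by_cases har : a = r
    · simp [Q, har] at ha
    · simpa [Q, har] using hadj a har
  have hle : parentGraph Q ≤ G := by
    intro a b hab
    obtain ⟨hne, rfl | rfl⟩ := parentGraph_adj.1 hab
    exacts [hQadj a hne, (hQadj b hne.symm).symm]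
  have : Nonempty α := ⟨r⟩
  exact ⟨Q, hQ, ((maximal_isAcyclic_iff_isTree.2 hQ.isTree).eq_of_le hG.isAcyclic hle).symm⟩

end ParentMaps

lemma onTreePath_iff_mem_support {α : Type} {G : SimpleGraph α} (hG : G.IsAcyclic) {r b a : α}
    {p : G.Walk r b} (hp : p.IsPath) : onTreePath G r b a ↔ a ∈ p.support :=
  ⟨fun h => h p hp, fun h q hq => by
    rwa [show q = p from congrArg Subtype.val ((hG.subsingleton_path r b).elim ⟨q, hq⟩ ⟨p, hp⟩)]⟩

lemma IsParentMap.onTreePath_iff {α : Type} [Finite α] {Q : α → α} {r : α}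
    (hQ : IsParentMap Q r) {a b : α} : onTreePath (parentGraph Q) r b a ↔ ∃ n, Q^[n] b = a := by
  obtain ⟨p, hp, hsupp⟩ := hQ.exists_isPath b
  rw [onTreePath_iff_mem_support hQ.isTree.isAcyclic hp.reverse, Walk.support_reverse,
    List.mem_reverse, hsupp]

section FirstHit

open scoped Classical

variable {α : Type*}

noncomputable def firstHit (P : α → α) (s : Set α) (a : α) : α :=
  if h : ∃ n, P^[n + 1] a ∈ s then P^[Nat.find h + 1] a else a

variable {P : α → α} {s : Set α}

lemma firstHit_mem {a : α} (h : ∃ n, P^[n + 1] a ∈ s) : firstHit P s a ∈ s := by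
  rw [firstHit, dif_pos h]
  exact Nat.find_spec h

lemma firstHit_eq_of_mem {a : α} (h : P a ∈ s) : firstHit P s a = P a := by
  have h' : ∃ n, P^[n + 1] a ∈ s := ⟨0, h⟩
  rw [firstHit, dif_pos h', (Nat.find_eq_zero h').2 h]
  rfl

lemma exists_firstHit_iterate_of_iterate {a b : α} (ha : a ∈ s) {n : ℕ} (h : P^[n] b = a) :
    ∃ m, (firstHit P s)^[m] b = a := by
  induction n using Nat.strong_induction_on generalizing b with
  | _ n ih =>
  cases n with
  | zero => exact ⟨0, h⟩
  | succ n =>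
    have hex : ∃ k, P^[k + 1] b ∈ s := ⟨n, h ▸ ha⟩
    have hk : Nat.find hex ≤ n := Nat.find_min' hex (h ▸ ha)
    have hb : firstHit P s b = P^[Nat.find hex + 1] b := dif_pos hex
    obtain ⟨m, hm⟩ := ih (n - Nat.find hex) (by omega) (b := firstHit P s b) (by
      rw [hb, ← iterate_add_apply, ← h]
      congr 1
      omega)
    exact ⟨m + 1, hm⟩

end FirstHit

lemma Set.EqOn.iterate {α : Type*} {f g : α → α} {s : Set α} (h : EqOn f g s) (hg : MapsTo g s s)
    (n : ℕ) : EqOn f^[n] g^[n] s := by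
  induction n with
  | zero => exact fun _ _ => rfl
  | succ n ih =>
    intro x hx
    rw [iterate_succ_apply, iterate_succ_apply, h hx]
    exact ih (hg hx)

section Components

variable {E C : Finset (Finset V)} {e f g : Finset V}

lemma edgeLinked_symm (h : edgeLinked E f g) : edgeLinked E g f := by
  refine (@Relation.ReflTransGen.stdSymm _ _ ⟨?_⟩).symm _ _ h
  rintro x y ⟨hx, hy, hxy⟩
  exact ⟨hy, hx, by rwa [Finset.inter_comm]⟩

lemma mem_component_iff : g ∈ component E f ↔ g ∈ E ∧ edgeLinked E f g := by
  simp [component]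

lemma mem_component_self (hf : f ∈ E) : f ∈ component E f :=
  mem_component_iff.2 ⟨hf, .refl⟩

lemma isComponent_component (hf : f ∈ E) : IsComponent E (component E f) := ⟨f, hf, rfl⟩

namespace IsComponent

lemma subset (hC : IsComponent E C) : C ⊆ E := by
  obtain ⟨f, -, rfl⟩ := hC
  exact fun g hg => (mem_component_iff.1 hg).1

lemma mem_of_inter (hC : IsComponent E C) (hf : f ∈ C) (hg : g ∈ E)
    (hfg : (f ∩ g).Nonempty) : g ∈ C := by
  obtain ⟨c, -, rfl⟩ := hC
  obtain ⟨hfE, hcf⟩ := mem_component_iff.1 hf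
  exact mem_component_iff.2 ⟨hg, hcf.tail ⟨hfE, hg, hfg⟩⟩

lemma component_eq (hC : IsComponent E C) (hf : f ∈ C) : component E f = C := by
  obtain ⟨c, -, rfl⟩ := hC
  have hcf := (mem_component_iff.1 hf).2
  ext g
  simp only [mem_component_iff]
  exact and_congr_right fun _ => ⟨hcf.trans, (edgeLinked_symm hcf).trans⟩

lemma insert_subset (hC : IsComponent (E.erase e) C) (he : e ∈ E) : insert e C ⊆ E :=
  Finset.insert_subset he (hC.subset.trans (Finset.erase_subset e E))

lemma mem_insert_of_inter (hC : IsComponent (E.erase e) C) (hf : f ∈ insert e C) (hfe : f ≠ e)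
    (hg : g ∈ E) (hfg : (f ∩ g).Nonempty) : g ∈ insert e C := by
  rcases eq_or_ne g e with rfl | hge
  · exact Finset.mem_insert_self g C
  · exact Finset.mem_insert_of_mem <| hC.mem_of_inter ((Finset.mem_insert.1 hf).resolve_left hfe)
      (Finset.mem_erase.2 ⟨hge, hg⟩) hfg

end IsComponent

lemma exists_isComponent_mem_insert (hf : f ∈ E) (hg : g ∈ E) (hfg : f ≠ e ∨ g ≠ e)
    (hint : (f ∩ g).Nonempty) :
    ∃ C, IsComponent (E.erase e) C ∧ f ∈ insert e C ∧ g ∈ insert e C := by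
  wlog hfe : f ≠ e generalizing f g
  · obtain ⟨C, hC, hgC, hfC⟩ :=
      this hg hf hfg.symm (by rwa [Finset.inter_comm]) (hfg.resolve_left hfe)
    exact ⟨C, hC, hfC, hgC⟩
  have hf' : f ∈ E.erase e := Finset.mem_erase.2 ⟨hfe, hf⟩
  have hfC : f ∈ insert e (component (E.erase e) f) :=
    Finset.mem_insert_of_mem (mem_component_self hf')
  exact ⟨_, isComponent_component hf', hfC,
    (isComponent_component hf').mem_insert_of_inter hfC hfe hg hint⟩

end Components

section DBParentMaps

open Relation

def parentStep (E : Finset (Finset V)) (P : Finset V → Finset V) (v : V) (x y : Finset V) :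
    Prop :=
  x ∈ E ∧ y ∈ E ∧ v ∈ x ∧ v ∈ y ∧ (P x = y ∨ P y = x)

/-- A disjoint branches decomposition of `E` rooted at `e`, given by its parent map `P`:
`a` is an ancestor of `b` iff `P^[n] b = a` for some `n`. -/
structure IsDBParentMap (E : Finset (Finset V)) (e : Finset V) (P : Finset V → Finset V) :
    Prop where
  root_mem : e ∈ E
  mapsTo : ∀ f ∈ E, P f ∈ E
  map_root : P e = e
  exists_iterate_eq_root : ∀ f ∈ E, ∃ n, P^[n] f = e
  linked : ∀ v, ∀ f ∈ E, ∀ g ∈ E, v ∈ f → v ∈ g → ReflTransGen (parentStep E P v) f g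
  disjoint : ∀ a ∈ E, ∀ b ∈ E, (∀ n, P^[n] b ≠ a) → (∀ n, P^[n] a ≠ b) → a ∩ b = ∅

variable {E : Finset (Finset V)} {e : Finset V} {P : Finset V → Finset V}

lemma DBD.exists_isDBParentMap (D : DBD E e) : ∃ P, IsDBParentMap E e P := by
  obtain ⟨Q, hQ, hT⟩ := D.J.isTree.exists_isParentMap ⟨e, D.rootMem⟩
  classical
  let P f := if h : f ∈ E then (Q ⟨f, h⟩).1 else f
  have hsemi : Semiconj Subtype.val Q P := fun a => by simp [P]
  have hiter : ∀ n (a : {f // f ∈ E}), P^[n] a.1 = (Q^[n] a).1 :=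
    fun n a => ((hsemi.iterate_right n) a).symm
  refine ⟨P, D.rootMem, fun f hf => by simp [P, hf], by simp [P, D.rootMem, hQ.map_root],
    fun f hf => ?_, fun v f hf g hg hvf hvg => ?_, fun a ha b hb hba hab => ?_⟩
  · obtain ⟨n, hn⟩ := hQ.exists_iterate_eq_root ⟨f, hf⟩
    exact ⟨n, by rw [hiter n ⟨f, hf⟩, hn]⟩
  · have hreach := D.J.conn v ⟨⟨f, hf⟩, hvf⟩ ⟨⟨g, hg⟩, hvg⟩
    rw [reachable_iff_reflTransGen] at hreach
    refine hreach.lift (fun x => x.1.1) fun x y hxy => ?_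
    rw [comap_adj, hT, parentGraph_adj] at hxy
    refine ⟨x.1.2, y.1.2, x.2, y.2, hxy.2.imp ?_ ?_⟩ <;>
      · intro h
        rw [← hsemi]
        exact congrArg Subtype.val h
  · have hnot : ∀ (x y : {f // f ∈ E}), (∀ n, P^[n] y.1 ≠ x.1) →
        ¬ onTreePath D.J.T ⟨e, D.rootMem⟩ y x := by
      rw [hT]
      intro x y hxy hpath
      obtain ⟨n, hn⟩ := hQ.onTreePath_iff.1 hpath
      exact hxy n (by rw [hiter, hn])
    exact D.disj ⟨a, ha⟩ ⟨b, hb⟩ (fun h => hba 0 (congrArg Subtype.val h).symm)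
      (hnot ⟨a, ha⟩ ⟨b, hb⟩ hba) (hnot ⟨b, hb⟩ ⟨a, ha⟩ hab)

lemma reachable_induce_of_reflTransGen {Q : {f // f ∈ E} → {f // f ∈ E}}
    (hQ : ∀ a, (Q a).1 = P a.1) {v : V} {x : {f // f ∈ E}} (hvx : v ∈ x.1) {g : Finset V}
    (h : ReflTransGen (parentStep E P v) x.1 g) (hg : g ∈ E) (hvg : v ∈ g) :
    ((parentGraph Q).induce {a : {f // f ∈ E} | v ∈ a.1}).Reachable ⟨x, hvx⟩ ⟨⟨g, hg⟩, hvg⟩ := by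
  induction h with
  | refl => rfl
  | @tail y z _ hyz ih =>
    obtain ⟨hy, -, hvy, -, hyz⟩ := hyz
    refine (ih hy hvy).trans ?_
    by_cases hne : y = z
    · subst hne
      rfl
    have hQ' : ∀ {a b}, P a.1 = b.1 → Q a = b := fun h => Subtype.ext ((hQ _).trans h)
    exact Adj.reachable <| comap_adj.2 <| parentGraph_adj.2
      ⟨fun h => hne (congrArg Subtype.val h), hyz.imp hQ' hQ'⟩

lemma IsDBParentMap.dbRootable (hP : IsDBParentMap E e P) : DbRootable E e := by
  let Q : {f // f ∈ E} → {f // f ∈ E} := fun a => ⟨P a.1, hP.mapsTo a.1 a.2⟩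
  have hiter : ∀ n a, (Q^[n] a).1 = P^[n] a.1 :=
    fun n => (Semiconj.iterate_right (f := Subtype.val) (fun _ => rfl) n)
  have hQ : IsParentMap Q ⟨e, hP.root_mem⟩ :=
    ⟨Subtype.ext hP.map_root, fun a => (hP.exists_iterate_eq_root a.1 a.2).imp
      fun n hn => Subtype.ext (by rw [hiter, hn])⟩
  have hpath : ∀ (a b : {f // f ∈ E}) (n : ℕ), P^[n] b.1 = a.1 →
      onTreePath (parentGraph Q) ⟨e, hP.root_mem⟩ b a :=
    fun a b n hn => hQ.onTreePath_iff.2 ⟨n, Subtype.ext (by rw [hiter, hn])⟩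
  refine ⟨⟨⟨parentGraph Q, hQ.isTree, ?_⟩, hP.root_mem,
    fun a b _ hba hab => hP.disjoint a.1 a.2 b.1 b.2 ?_ ?_⟩⟩
  · intro v x y
    exact reachable_induce_of_reflTransGen (fun _ => rfl) x.2
      (hP.linked v _ x.1.2 _ y.1.2 x.2 y.2) y.1.2 y.2
  · exact fun n hn => hba (hpath a b n hn)
  · exact fun n hn => hab (hpath b a n hn)

lemma IsDBParentMap.restrict (hP : IsDBParentMap E e P) {S : Finset (Finset V)} (hSE : S ⊆ E)
    (heS : e ∈ S) (hS : ∀ f ∈ S, f ≠ e → ∀ g ∈ E, (f ∩ g).Nonempty → g ∈ S) :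
    IsDBParentMap S e (firstHit P S) := by
  have hPe : P e ∈ (S : Set (Finset V)) := by rw [hP.map_root]; exact heS
  refine ⟨heS, fun f hf => firstHit_mem ?_, (firstHit_eq_of_mem hPe).trans hP.map_root,
    fun f hf => ?_, fun v f hf g hg hvf hvg => ?_, fun a ha b hb hba hab => ?_⟩
  · obtain ⟨n, hn⟩ := hP.exists_iterate_eq_root f (hSE hf)
    exact ⟨n, by rw [iterate_succ_apply', hn]; exact hPe⟩
  · obtain ⟨n, hn⟩ := hP.exists_iterate_eq_root f (hSE hf)
    exact exists_firstHit_iterate_of_iterate heS hn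
  · rcases eq_or_ne f g with rfl | hfg
    · rfl
    -- every edge through `v` meets `f` or `g`, one of which is not the root
    have hvS : ∀ x ∈ E, v ∈ x → x ∈ S := by
      intro x hx hvx
      rcases eq_or_ne f e with rfl | hfe
      · exact hS g hg (Ne.symm hfg) x hx ⟨v, Finset.mem_inter.2 ⟨hvg, hvx⟩⟩
      · exact hS f hf hfe x hx ⟨v, Finset.mem_inter.2 ⟨hvf, hvx⟩⟩
    refine ReflTransGen.mono (p := parentStep S (firstHit P S) v)
      (fun x y ⟨hx, hy, hvx, hvy, hxy⟩ => ⟨hvS x hx hvx, hvS y hy hvy, hvx, hvy, hxy.imp ?_ ?_⟩)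
      f g (hP.linked v f (hSE hf) g (hSE hg) hvf hvg)
    · exact fun h => (firstHit_eq_of_mem (h ▸ hvS y hy hvy)).trans h
    · exact fun h => (firstHit_eq_of_mem (h ▸ hvS x hx hvx)).trans h
  · refine hP.disjoint a (hSE ha) b (hSE hb) (fun n hn => ?_) (fun n hn => ?_)
    · obtain ⟨m, hm⟩ := exists_firstHit_iterate_of_iterate (s := S) ha hn
      exact hba m hm
    · obtain ⟨m, hm⟩ := exists_firstHit_iterate_of_iterate (s := S) hb hn
      exact hab m hm

noncomputable def gluedParent (E : Finset (Finset V)) (e : Finset V)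
    (Pc : Finset (Finset V) → Finset V → Finset V) (f : Finset V) : Finset V :=
  if f ∈ E.erase e then Pc (component (E.erase e) f) f else f

lemma eqOn_gluedParent {Pc : Finset (Finset V) → Finset V → Finset V} {C : Finset (Finset V)}
    (hC : IsComponent (E.erase e) C) (hPC : IsDBParentMap (insert e C) e (Pc C)) :
    Set.EqOn (gluedParent E e Pc) (Pc C) (insert e C : Finset (Finset V)) := by
  intro f hf
  rcases Finset.mem_insert.1 hf with rfl | hfC
  · rw [gluedParent, if_neg (Finset.notMem_erase f E), hPC.map_root]
  · rw [gluedParent, if_pos (hC.subset hfC), hC.component_eq hfC]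

lemma IsDBParentMap.glue (he : e ∈ E) {Pc : Finset (Finset V) → Finset V → Finset V}
    (hPc : ∀ C, IsComponent (E.erase e) C → IsDBParentMap (insert e C) e (Pc C)) :
    IsDBParentMap E e (gluedParent E e Pc) := by
  have hiter : ∀ C, IsComponent (E.erase e) C → ∀ n, ∀ f ∈ insert e C,
      (gluedParent E e Pc)^[n] f = (Pc C)^[n] f :=
    fun C hC n f hf => (eqOn_gluedParent hC (hPc C hC)).iterate
      (fun f hf => (hPc C hC).mapsTo f hf) n hf
  have hroot : gluedParent E e Pc e = e := if_neg (Finset.notMem_erase e E)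
  have hcomp : ∀ f ∈ E, f ≠ e → ∃ C, IsComponent (E.erase e) C ∧ f ∈ insert e C := by
    intro f hf hfe
    have hf' : f ∈ E.erase e := Finset.mem_erase.2 ⟨hfe, hf⟩
    exact ⟨_, isComponent_component hf', Finset.mem_insert_of_mem (mem_component_self hf')⟩
  have hreach : ∀ f ∈ E, ∃ n, (gluedParent E e Pc)^[n] f = e := by
    intro f hf
    rcases eq_or_ne f e with rfl | hfe
    · exact ⟨0, rfl⟩
    obtain ⟨C, hC, hfC⟩ := hcomp f hf hfe
    obtain ⟨n, hn⟩ := (hPc C hC).exists_iterate_eq_root f hfC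
    exact ⟨n, by rw [hiter C hC n f hfC, hn]⟩
  refine ⟨he, fun f hf => ?_, hroot, hreach, fun v f hf g hg hvf hvg => ?_,
    fun a ha b hb hba hab => ?_⟩
  · rcases eq_or_ne f e with rfl | hfe
    · rwa [hroot]
    obtain ⟨C, hC, hfC⟩ := hcomp f hf hfe
    rw [eqOn_gluedParent hC (hPc C hC) hfC]
    exact hC.insert_subset he ((hPc C hC).mapsTo f hfC)
  · rcases eq_or_ne f g with rfl | hfg
    · rfl
    obtain ⟨C, hC, hfC, hgC⟩ := exists_isComponent_mem_insert (e := e) hf hg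
      (by rcases eq_or_ne f e with rfl | hfe; exacts [Or.inr (Ne.symm hfg), Or.inl hfe])
      ⟨v, Finset.mem_inter.2 ⟨hvf, hvg⟩⟩
    have hPC := hPc C hC
    refine ReflTransGen.mono (p := parentStep E (gluedParent E e Pc) v)
      (fun x y ⟨hx, hy, hvx, hvy, hxy⟩ =>
        ⟨hC.insert_subset he hx, hC.insert_subset he hy, hvx, hvy, ?_⟩)
      f g (hPC.linked v f hfC g hgC hvf hvg)
    rwa [eqOn_gluedParent hC hPC hx, eqOn_gluedParent hC hPC hy]
  · by_contra hne
    obtain ⟨v, hv⟩ := Finset.nonempty_iff_ne_empty.2 hne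
    have hae : a ≠ e := fun h => (hreach b hb).elim fun n hn => hba n (hn.trans h.symm)
    obtain ⟨C, hC, haC, hbC⟩ := exists_isComponent_mem_insert ha hb (.inl hae) ⟨v, hv⟩
    exact hne <| (hPc C hC).disjoint a haC b hbC
      (fun n hn => hba n (by rw [hiter C hC n b hbC, hn]))
      (fun n hn => hab n (by rw [hiter C hC n a haC, hn]))

end DBParentMaps

/-- `H` is db-rootable in `e` iff for every connected component `C` of
`H \ e` the hypergraph obtained by adding `e` to `C` is db-rootable in `e`. -/
theorem stmt9 (E : Finset (Finset V)) (e : Finset V) (he : e ∈ E) :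
    DbRootable E e ↔
      ∀ C : Finset (Finset V), IsComponent (E.erase e) C → DbRootable (insert e C) e := by
  constructor
  · rintro ⟨D⟩ C hC
    obtain ⟨P, hP⟩ := D.exists_isDBParentMap
    exact (hP.restrict (hC.insert_subset he) (Finset.mem_insert_self e C)
      fun f hf hfe g hg => hC.mem_insert_of_inter hf hfe hg).dbRootable
  · intro h
    choose! Pc hPc using fun C (hC : IsComponent (E.erase e) C) =>
      (h C hC).elim DBD.exists_isDBParentMap
    exact (IsDBParentMap.glue he hPc).dbRootable
end

section
/- Let H = (V,E) be a hypergraph and A ⊆ E. If there exists a strong A-separator of H, then every A-separator of H is strong. -/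
variable {V : Type} [DecidableEq V]

/-- The consecutive-ones (join path) condition for a list of hyperedges. -/
def consecOnes (l : List (Finset V)) : Prop :=
  ∀ i j k : Fin l.length, i ≤ j → j ≤ k →
    ∀ v : V, v ∈ l.get i → v ∈ l.get k → v ∈ l.get j

/-- `l` is a join path (as an ordered list) of the edge set `A`. -/
def IsJoinPathList (A : Finset (Finset V)) (l : List (Finset V)) : Prop :=
  l.Nodup ∧ (∀ f, f ∈ l ↔ f ∈ A) ∧ consecOnes l

/-- `l = a₁ … a_m` is an `A`-separator of the hypergraph with edge set `E`:
a join path of `A` such that for every connected component `C` of `H \ A`,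
if `a_j ∩ V_C ≠ ∅` then `a_i ∩ V_C ⊆ a_j ∩ V_C` for all `i ≤ j`. -/
def IsSeparator (E A : Finset (Finset V)) (l : List (Finset V)) : Prop :=
  IsJoinPathList A l ∧
  ∀ C : Finset (Finset V), IsComponent (E \ A) C →
    ∀ i j : Fin l.length, i ≤ j → (l.get j ∩ C.sup id).Nonempty →
      l.get i ∩ C.sup id ⊆ l.get j ∩ C.sup id

/-- A strong `A`-separator: additionally, for every connected component `C` of
`H \ A`, the hypergraph `C ∪ {a_{l_C}}` is db-rootable in `a_{l_C}`, where
`a_{l_C}` is the last edge of the list meeting `V_C`. -/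
def IsStrongSeparator (E A : Finset (Finset V)) (l : List (Finset V)) : Prop :=
  IsSeparator E A l ∧
  ∀ C : Finset (Finset V), IsComponent (E \ A) C →
    ∀ j : Fin l.length, (l.get j ∩ C.sup id).Nonempty →
      (∀ i : Fin l.length, j < i → l.get i ∩ C.sup id = ∅) →
      DbRootable (insert (l.get j) C) (l.get j)

/-!
For a component `C` of `H \ A`, the separator condition makes the trace on `V_C` of the last
edge meeting `V_C` contain the traces of all edges of `A`, so this trace is the same for
every `A`-separator. And whether `C ∪ {e}` is db-rootable in `e ∉ C` depends only on
`e ∩ V_C`: swapping `e` for an edge with the same trace on `V_C` carries a disjoint branches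
decomposition along.
-/

open SimpleGraph

lemma onTreePath.of_map {α β : Type} {G : SimpleGraph α} {G' : SimpleGraph β} (f : G →g G')
    (hf : Function.Injective f) {r y x : α} (h : onTreePath G' (f r) (f y) (f x)) :
    onTreePath G r y x := by
  intro p hp
  have hx := h (p.map f) (hp.map hf)
  rw [Walk.support_map, List.mem_map] at hx
  obtain ⟨x', hx', hxx'⟩ := hx
  exact hf hxx' ▸ hx'

lemma onTreePath_start {α : Type} (G : SimpleGraph α) (r y : α) : onTreePath G r y r :=
  fun p _ => p.start_mem_support

lemma mem_swap_iff {e e' : Finset V} {v : V} (hv : v ∈ e ↔ v ∈ e') (f : Finset V) :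
    v ∈ Equiv.swap e e' f ↔ v ∈ f := by
  rw [Equiv.swap_apply_def]
  split_ifs with h₁ h₂
  · rw [h₁, hv]
  · rw [h₂, hv]
  · rfl

lemma swap_mem_insert_iff {C : Finset (Finset V)} {e e' : Finset V} (he : e ∉ C) (he' : e' ∉ C)
    (f : Finset V) : Equiv.swap e e' f ∈ insert e' C ↔ f ∈ insert e C := by
  rw [Equiv.swap_apply_def]
  split_ifs with h₁ h₂ <;> subst_vars <;> simp_all [Ne.symm]

def insertSwapEquiv {C : Finset (Finset V)} {e e' : Finset V} (he : e ∉ C) (he' : e' ∉ C) :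
    {f // f ∈ insert e C} ≃ {f // f ∈ insert e' C} :=
  (Equiv.swap e e').subtypeEquiv fun f => (swap_mem_insert_iff he he' f).symm

lemma DbRootable.of_inter_sup_eq {C : Finset (Finset V)} {e e' : Finset V} (he : e ∉ C)
    (he' : e' ∉ C) (htrace : e ∩ C.sup id = e' ∩ C.sup id)
    (h : DbRootable (insert e' C) e') : DbRootable (insert e C) e := by
  obtain ⟨D⟩ := h
  set φ := insertSwapEquiv he he'
  let ψ : D.J.T.comap φ ≃g D.J.T := Iso.comap φ D.J.T
  have hroot : φ ⟨e, Finset.mem_insert_self e C⟩ = ⟨e', D.rootMem⟩ :=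
    Subtype.ext (Equiv.swap_apply_left e e')
  have hfix (x : {f // f ∈ insert e C}) (hx : x.1 ≠ e) : (φ x).1 = x.1 :=
    Equiv.swap_apply_of_ne_of_ne hx fun h => he' (h ▸ (Finset.mem_insert.1 x.2).resolve_left hx)
  refine ⟨⟨⟨D.J.T.comap φ, ψ.isTree_iff.2 D.J.isTree, fun v => ?_⟩,
    Finset.mem_insert_self e C, ?_⟩⟩
  · by_cases hv : v ∈ C.sup id
    · have hev : v ∈ e ↔ v ∈ e' := by
        simpa [hv] using Finset.ext_iff.1 htrace v
      have hS : {x : {f // f ∈ insert e C} | v ∈ x.1} = ψ ⁻¹' {y | v ∈ y.1} := by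
        ext x
        exact (mem_swap_iff hev x.1).symm
      exact (ψ.induce (hS ▸ ψ.bijective.bijOn_preimage)).preconnected_iff.2 (D.J.conn v)
    · have hx (x : {x : {f // f ∈ insert e C} // v ∈ x.1}) : x.1.1 = e :=
        (Finset.mem_insert.1 x.1.2).resolve_right fun hC => hv (Finset.mem_sup.2 ⟨_, hC, x.2⟩)
      have : Subsingleton {x : {f // f ∈ insert e C} | v ∈ x.1} :=
        ⟨fun x y => Subtype.ext (Subtype.ext ((hx x).trans (hx y).symm))⟩
      exact Preconnected.of_subsingleton
  · intro a b hab hpa hpb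
    have hne_root (x y : {f // f ∈ insert e C}) (hx : x.1 = e) :
        onTreePath (D.J.T.comap φ) ⟨e, Finset.mem_insert_self e C⟩ y x := by
      rw [show x = ⟨e, Finset.mem_insert_self e C⟩ from Subtype.ext hx]
      exact onTreePath_start _ _ _
    have ha : a.1 ≠ e := fun h => hpa (hne_root a b h)
    have hb : b.1 ≠ e := fun h => hpb (hne_root b a h)
    rw [← hfix a ha, ← hfix b hb]
    refine D.disj (φ a) (φ b) (φ.injective.ne hab) (fun h => hpa ?_) (fun h => hpb ?_)
    · exact onTreePath.of_map ψ.toHom ψ.injective (hroot ▸ h)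
    · exact onTreePath.of_map ψ.toHom ψ.injective (hroot ▸ h)

lemma Fin.exists_last {n : ℕ} {p : Fin n → Prop} {i : Fin n} (hi : p i) :
    ∃ j, p j ∧ ∀ k, j < k → ¬ p k := by
  classical
  obtain ⟨j, hj, hmax⟩ := (Finset.univ.filter p).exists_max_image id ⟨i, by simpa using hi⟩
  simp only [Finset.mem_filter, Finset.mem_univ, true_and, id] at hj hmax
  exact ⟨j, hj, fun k hjk hk => (hmax k hk).not_gt hjk⟩

lemma IsComponent.subset_s10 {E C : Finset (Finset V)} (hC : IsComponent E C) : C ⊆ E := by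
  classical
  obtain ⟨e, -, rfl⟩ := hC
  exact Finset.filter_subset _ _

lemma IsSeparator.mem_iff {E A : Finset (Finset V)} {l : List (Finset V)}
    (hl : IsSeparator E A l) (f : Finset V) : f ∈ l ↔ f ∈ A :=
  hl.1.2.1 f

lemma IsSeparator.inter_subset_last {E A C : Finset (Finset V)} {l : List (Finset V)}
    (hl : IsSeparator E A l) (hC : IsComponent (E \ A) C) {j : Fin l.length}
    (hj : (l.get j ∩ C.sup id).Nonempty) (hlast : ∀ i, j < i → l.get i ∩ C.sup id = ∅)
    {f : Finset V} (hf : f ∈ A) : f ∩ C.sup id ⊆ l.get j ∩ C.sup id := by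
  obtain ⟨i, rfl⟩ := List.mem_iff_get.1 ((hl.mem_iff f).2 hf)
  rcases le_or_gt i j with hij | hji
  · exact hl.2 C hC i j hij hj
  · rw [hlast i hji]
    exact Finset.empty_subset _

theorem stmt10_general (E A : Finset (Finset V))
    (hex : ∃ l, IsStrongSeparator E A l) :
    ∀ l, IsSeparator E A l → IsStrongSeparator E A l := by
  obtain ⟨l₀, hsep₀, hdb₀⟩ := hex
  intro l hl
  refine ⟨hl, fun C hC j hj hlast => ?_⟩
  have hnotC {f : Finset V} (hf : f ∈ A) : f ∉ C := fun h =>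
    (Finset.mem_sdiff.1 (hC.subset_s10 h)).2 hf
  have hmem : l.get j ∈ A := (hl.mem_iff _).1 (l.get_mem j)
  obtain ⟨i₀, hi₀⟩ := List.mem_iff_get.1 ((hsep₀.mem_iff _).2 hmem)
  obtain ⟨j₀, hj₀, hlast₀⟩ :=
    Fin.exists_last (p := fun k => (l₀.get k ∩ C.sup id).Nonempty) (hi₀ ▸ hj)
  replace hlast₀ (i) (hi : j₀ < i) : l₀.get i ∩ C.sup id = ∅ :=
    Finset.not_nonempty_iff_eq_empty.1 (hlast₀ i hi)
  have hmem₀ : l₀.get j₀ ∈ A := (hsep₀.mem_iff _).1 (l₀.get_mem j₀)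
  have htrace : l.get j ∩ C.sup id = l₀.get j₀ ∩ C.sup id :=
    (hsep₀.inter_subset_last hC hj₀ hlast₀ hmem).antisymm
      (hl.inter_subset_last hC hj hlast hmem₀)
  exact DbRootable.of_inter_sup_eq (hnotC hmem) (hnotC hmem₀) htrace
    (hdb₀ C hC j₀ hj₀ hlast₀)

/-- if the hypergraph `H = (V,E)` has a strong `A`-separator, then every
`A`-separator of `H` is strong. -/
theorem stmt10 (E A : Finset (Finset V)) (hA : A ⊆ E)
    (hex : ∃ l, IsStrongSeparator E A l) :
    ∀ l, IsSeparator E A l → IsStrongSeparator E A l :=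
  stmt10_general E A hex
end

section
/- For each n ≥ 1, the hypergraph H_n with vertex set {x₁,…,x_n, y₁,…,y_n} and edge set { {y_i, x₁, …, x_n} | i ≤ n } ∪ { {x_i} | i ≤ n } is γ-acyclic, but the family of incidence graphs of H_n has unbounded treewidth (the incidence graph of H_n contains a subgraph isomorphic to K_{n,n}). -/
variable {V : Type} [DecidableEq V]

/-- The hypergraph with edge set `E` has a γ-cycle `(e₁,x₁,…,e_m,x_m)`, `m ≥ 3`. -/
def HasGammaCycle (E : Finset (Finset V)) : Prop :=
  ∃ (m : ℕ) (es : ℕ → Finset V) (xs : ℕ → V), 3 ≤ m ∧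
    (∀ i < m, es i ∈ E) ∧
    (∀ i < m, ∀ j < m, es i = es j → i = j) ∧
    (∀ i < m, ∀ j < m, xs i = xs j → i = j) ∧
    (∀ i, i + 1 < m → xs i ∈ es i ∧ xs i ∈ es (i + 1) ∧
      ∀ j < m, j ≠ i → j ≠ i + 1 → xs i ∉ es j) ∧
    xs (m - 1) ∈ es (m - 1) ∧ xs (m - 1) ∈ es 0

/-- A hypergraph is γ-acyclic if it has no γ-cycle. -/
def GammaAcyclic (E : Finset (Finset V)) : Prop := ¬ HasGammaCycle E

/-- The incidence graph of the hypergraph with edge set `E`: the bipartite graph on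
vertices ⊕ edges with `v` adjacent to `f` iff `v ∈ f`. -/
def incidenceGraph (E : Finset (Finset V)) : SimpleGraph (V ⊕ {f // f ∈ E}) :=
  SimpleGraph.fromRel fun a b =>
    match a, b with
    | Sum.inl v, Sum.inr f => v ∈ f.1
    | _, _ => False

/-- The edge set of the hypergraph `H_n` on vertices `{x₁,…,x_n} ⊕ {y₁,…,y_n}`:
the edges `{y_i, x₁, …, x_n}` for `i ≤ n` and the singletons `{x_i}` for `i ≤ n`. -/
def bigE (n : ℕ) : Finset (Finset (Fin n ⊕ Fin n)) :=
  (Finset.univ.image fun i : Fin n =>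
      insert (Sum.inr i) ((Finset.univ : Finset (Fin n)).image Sum.inl)) ∪
  (Finset.univ.image fun i : Fin n => ({Sum.inl i} : Finset (Fin n ⊕ Fin n)))

lemma mem_bigE {n : ℕ} {e : Finset (Fin n ⊕ Fin n)} :
    e ∈ bigE n ↔ (∃ i : Fin n, e = insert (Sum.inr i) ((Finset.univ : Finset (Fin n)).image Sum.inl))
      ∨ ∃ i : Fin n, e = ({Sum.inl i} : Finset (Fin n ⊕ Fin n)) := by
  simp [bigE, eq_comm]

lemma only_B {n : ℕ} {y : Fin n} {e : Finset (Fin n ⊕ Fin n)} (he : e ∈ bigE n)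
    (hy : Sum.inr y ∈ e) :
    e = insert (Sum.inr y) ((Finset.univ : Finset (Fin n)).image Sum.inl) := by
  rcases mem_bigE.1 he with ⟨i, rfl⟩ | ⟨i, rfl⟩
  · simp at hy
    subst hy; rfl
  · simp at hy

lemma vertex_in_two {n : ℕ} {e f : Finset (Fin n ⊕ Fin n)} {v : Fin n ⊕ Fin n}
    (he : e ∈ bigE n) (hf : f ∈ bigE n) (hef : e ≠ f) (hve : v ∈ e) (hvf : v ∈ f) :
    ∃ k : Fin n, v = Sum.inl k := by
  rcases v with k | y
  · exact ⟨k, rfl⟩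
  · exact absurd ((only_B he hve).trans (only_B hf hvf).symm) hef

/-- for every `n ≥ 1` the hypergraph `H_n` is γ-acyclic, yet its
incidence graph contains a subgraph isomorphic to `K_{n,n}` (hence the family of
incidence graphs has unbounded treewidth). -/
theorem stmt13 (n : ℕ) (hn : 1 ≤ n) :
    GammaAcyclic (bigE n) ∧
    ∃ φ : completeBipartiteGraph (Fin n) (Fin n) →g incidenceGraph (bigE n),
      Function.Injective φ := by
  constructor
  · rintro ⟨m, es, xs, hm, hE, hesinj, hxsinj, hmid, _, hlast0⟩
    have h0m : 0 < m := by omega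
    have h1m : 1 < m := by omega
    have h2m : 2 < m := by omega
    obtain ⟨hx00, hx01, hx0n⟩ := hmid 0 (by omega)
    obtain ⟨hx11, hx12, hx1n⟩ := hmid 1 (by omega)
    have he01 : es 0 ≠ es 1 := fun h => by simpa using hesinj 0 h0m 1 h1m h
    have he12 : es 1 ≠ es 2 := fun h => by simpa using hesinj 1 h1m 2 h2m h
    obtain ⟨k, hk⟩ := vertex_in_two (hE 0 h0m) (hE 1 h1m) he01 hx00 hx01
    obtain ⟨k', hk'⟩ := vertex_in_two (hE 1 h1m) (hE 2 h2m) he12 hx11 hx12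
    have h10 : xs 1 ∉ es 0 := hx1n 0 h0m (by omega) (by omega)
    -- es 0 is the singleton {inl k}
    have hes0 : es 0 = ({Sum.inl k} : Finset (Fin n ⊕ Fin n)) := by
      rcases mem_bigE.1 (hE 0 h0m) with ⟨i, h⟩ | ⟨i, h⟩
      · exfalso; apply h10; rw [h, hk']; simp
      · rw [h] at hx00 ⊢
        rw [hk] at hx00
        simp at hx00
        rw [hx00]
    -- the last vertex equals xs 0
    have hlast : xs (m - 1) = xs 0 := by
      rw [hes0] at hlast0
      simp at hlast0
      rw [hlast0, ← hk]
    have := hxsinj (m - 1) (by omega) 0 h0m hlast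
    omega
  · refine ⟨⟨fun a => match a with
      | Sum.inl i => Sum.inl (Sum.inl i)
      | Sum.inr i => Sum.inr ⟨insert (Sum.inr i) ((Finset.univ : Finset (Fin n)).image Sum.inl),
          mem_bigE.2 (Or.inl ⟨i, rfl⟩)⟩, ?_⟩, ?_⟩
    · rintro (a | a) (b | b) hab <;> simp_all [completeBipartiteGraph, incidenceGraph]
    · intro a b hab
      rcases a with a | a <;> rcases b with b | b
      · injection hab with h
      · injection hab
      · injection hab
      · injection hab with h
        have h2 : insert (Sum.inr a) ((Finset.univ : Finset (Fin n)).image Sum.inl)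
            = insert (Sum.inr b) ((Finset.univ : Finset (Fin n)).image Sum.inl) :=
          congrArg Subtype.val h
        have := h2 ▸ (Finset.mem_insert_self (Sum.inr a : Fin n ⊕ Fin n) _)
        simp at this
        simp [this]
end

section
/- If SAT is NP-hard for read-twice CNF-formulas, then SAT restricted to undirected path acyclic CNF-formulas is NP-hard. Concretely: for every read-twice CNF-formula F, the formula F' obtained by adding a new variable x and a clause containing all variables of F together with x (as in the Samer–Szeider construction) is undirected path acyclic, and F' is satisfiable iff F is. -/
variable {V : Type} [DecidableEq V]

/-- A clause: a finite set of literals (variable, sign). -/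
abbrev Clause (V : Type) := Finset (V × Bool)

/-- A CNF-formula: a finite set of clauses. -/
abbrev CNF (V : Type) := Finset (Clause V)

/-- An assignment satisfies a clause if it makes some literal true. -/
def satClause (b : V → Bool) (c : Clause V) : Prop := ∃ p ∈ c, b p.1 = p.2

/-- An assignment satisfies a CNF-formula if it satisfies every clause. -/
def satCNF (b : V → Bool) (F : CNF V) : Prop := ∀ c ∈ F, satClause b c

/-- The variables of a CNF-formula. -/
def cnfVars (F : CNF V) : Finset V := F.sup fun c => c.image Prod.fst

/-- The hypergraph of a CNF-formula: one hyperedge per clause, containing its variables. -/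
def cnfHyp (F : CNF V) : Finset (Finset V) := F.image fun c => c.image Prod.fst

/-- A CNF-formula is read-twice if every variable appears in at most two clauses. -/
def ReadTwice (F : CNF V) : Prop :=
  ∀ v : V, (F.filter fun c => ∃ s, (v, s) ∈ c).card ≤ 2

/-- A hypergraph is undirected path acyclic if it has a join tree in which, for every
vertex `v`, the edges containing `v` form an (undirected) path: the induced subtree is
connected and every node has at most two neighbours within it. -/
def UPAcyclic (E : Finset (Finset V)) : Prop :=
  ∃ J : JoinTreeOf E, ∀ v : V,
    ∀ x : {f : {f // f ∈ E} | v ∈ f.1.1},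
      ((J.T.induce {f : {f // f ∈ E} | v ∈ f.1.1}).neighborSet x).ncard ≤ 2

open Finset SimpleGraph

/-!
Hang every clause of `F` as a leaf below the new clause, which contains all variables of `F`
together with `x`. In this star the edges containing a variable `v` are the centre together with
at most two leaves (read-twice), so they form a path of length at most two. Satisfiability
is unaffected because the fresh variable `x` alone satisfies the new clause.
-/

namespace SimpleGraph

variable {α : Type*} {r v : α}

theorem induce_starGraph {s : Set α} (hr : r ∈ s) :
    (starGraph r).induce s = starGraph (⟨r, hr⟩ : s) := by
  ext a b
  simp [Subtype.ext_iff]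

theorem neighborSet_starGraph_self : (starGraph r).neighborSet r = {r}ᶜ := by
  ext w
  simp [eq_comm]

theorem neighborSet_starGraph_of_ne (h : v ≠ r) : (starGraph r).neighborSet v = {r} := by
  ext w
  simp only [mem_neighborSet, starGraph_adj, Set.mem_singleton_iff]
  grind

end SimpleGraph

theorem upAcyclic_insert_of_forall_subset {E : Finset (Finset V)} {R : Finset V}
    (hsub : ∀ e ∈ E, e ⊆ R) (hdeg : ∀ v, #{e ∈ E | v ∈ e} ≤ 2) : UPAcyclic (insert R E) := by
  let c : {f // f ∈ insert R E} := ⟨R, mem_insert_self R E⟩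
  have center_mem : ∀ (v : V) (f : {f // f ∈ insert R E}), v ∈ f.1 →
      c ∈ {f : {f // f ∈ insert R E} | v ∈ f.1} := fun v f hv => by
    rcases mem_insert.mp f.2 with h | h
    · exact (h ▸ hv : v ∈ R)
    · exact hsub _ h hv
  refine ⟨⟨starGraph c, isTree_starGraph c, fun v a b => ?_⟩, fun v y => ?_⟩
  · rw [induce_starGraph (center_mem v a.1 a.2)]
    exact connected_starGraph _ a b
  · -- `UPAcyclic` tests membership in the underlying multiset `f.1.1`, hence `erw`
    erw [induce_starGraph (center_mem v y.1 y.2)]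
    by_cases hy : y = ⟨c, center_mem v y.1 y.2⟩
    · rw [hy, neighborSet_starGraph_self]
      calc _ ≤ (↑{e ∈ E | v ∈ e} : Set (Finset V)).ncard := by
            refine Set.ncard_le_ncard_of_injOn (fun z => z.1.1) (fun z hz => ?_)
              (Subtype.val_injective.comp Subtype.val_injective).injOn (Set.toFinite _)
            have hzR : z.1.1 ≠ R := fun h => hz (Subtype.ext (Subtype.ext h))
            exact mem_coe.mpr (mem_filter.mpr ⟨(mem_insert.mp z.1.2).resolve_left hzR, z.2⟩)
        _ ≤ 2 := (Set.ncard_coe_finset _).trans_le (hdeg v)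
    · rw [neighborSet_starGraph_of_ne hy, Set.ncard_singleton]
      omega

theorem cnfHyp_insert (c : Clause V) (F : CNF V) :
    cnfHyp (insert c F) = insert (c.image Prod.fst) (cnfHyp F) := by
  simp [cnfHyp]

theorem image_fst_subset_cnfVars {F : CNF V} {c : Clause V} (hc : c ∈ F) :
    c.image Prod.fst ⊆ cnfVars F :=
  le_sup (f := fun c : Clause V => c.image Prod.fst) hc

theorem subset_cnfVars_of_center_memnfHyp {F : CNF V} {e : Finset V} (he : e ∈ cnfHyp F) :
    e ⊆ cnfVars F := by
  obtain ⟨c, hc, rfl⟩ := mem_image.mp he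
  exact image_fst_subset_cnfVars hc

theorem ReadTwice.card_filter_center_memnfHyp_le {F : CNF V} (h : ReadTwice F) (v : V) :
    #{e ∈ cnfHyp F | v ∈ e} ≤ 2 := by
  calc #{e ∈ cnfHyp F | v ∈ e}
      ≤ #((F.filter fun c => ∃ s, (v, s) ∈ c).image fun c => c.image Prod.fst) := by
        refine card_le_card fun e he => ?_
        obtain ⟨he, hv⟩ := mem_filter.mp he
        obtain ⟨c, hc, rfl⟩ := mem_image.mp he
        obtain ⟨p, hp, rfl⟩ := mem_image.mp hv
        exact mem_image_of_mem _ (mem_filter.mpr ⟨hc, p.2, hp⟩)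
    _ ≤ #(F.filter fun c => ∃ s, (v, s) ∈ c) := card_image_le
    _ ≤ 2 := h v

theorem satCNF.update_of_notMem_cnfVars {b : V → Bool} {F : CNF V} {x : V}
    (hb : satCNF b F) (hx : x ∉ cnfVars F) (s : Bool) : satCNF (Function.update b x s) F := by
  intro c hc
  obtain ⟨p, hp, hbp⟩ := hb c hc
  have hpx : p.1 ≠ x := fun h => hx (h ▸ image_fst_subset_cnfVars hc (mem_image_of_mem _ hp))
  exact ⟨p, hp, by rw [Function.update_of_ne hpx, hbp]⟩

/-- for every read-twice CNF-formula `F` and fresh variable `x`, the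
formula `F'` obtained by adding a clause containing all variables of `F` together with
`x` (the Samer–Szeider construction) is undirected path acyclic, and `F'` is
satisfiable iff `F` is. Hence NP-hardness of SAT for read-twice formulas implies
NP-hardness of SAT for undirected path acyclic formulas. -/
theorem stmt17 (F : CNF V) (x : V) (hx : x ∉ cnfVars F) (hrt : ReadTwice F) :
    UPAcyclic (cnfHyp (insert (insert (x, true) ((cnfVars F).image fun v => (v, true))) F)) ∧
    ((∃ b : V → Bool,
        satCNF b (insert (insert (x, true) ((cnfVars F).image fun v => (v, true))) F)) ↔
      (∃ b : V → Bool, satCNF b F)) := by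
  set C : Clause V := insert (x, true) ((cnfVars F).image fun v => (v, true))
  have hC : C.image Prod.fst = insert x (cnfVars F) := by
    simp [C, image_insert, image_image, Function.comp_def]
  refine ⟨?_, fun ⟨b, hb⟩ => ⟨b, fun c hc => hb c (mem_insert_of_mem hc)⟩,
    fun ⟨b, hb⟩ => ⟨Function.update b x true, fun c hc => ?_⟩⟩
  · rw [cnfHyp_insert, hC]
    exact upAcyclic_insert_of_forall_subset
      (fun e he => (subset_cnfVars_of_center_memnfHyp he).trans (subset_insert _ _))
      hrt.card_filter_center_memnfHyp_le
  · rcases mem_insert.mp hc with rfl | hc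
    · exact ⟨(x, true), mem_insert_self _ _, Function.update_self ..⟩
    · exact hb.update_of_notMem_cnfVars hx true c hc
end
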